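/- arXiv:2405.12825 — 12 statements merged into one kernel-verified Lean document; each statement's English description precedes it below -/
import Mathlib

section
/- Let I, J ⊆ ℝ be nonempty open intervals, let f : ℝ → ℝ and g : ℝ → ℝ be C^∞ on I and J respectively, and let K₀ ∈ ℝ. Suppose that for all x ∈ I and y ∈ J, setting w = 1 + f'(x)² + g'(y)², one has w²·K₀ = w·(f'(x)² + g'(y)²) + f''(x)·(g''(y) − g'(y)² − 1) + g''(y)·(f''(x) − f'(x)² − 1). Then f'' vanishes identically on I or g'' vanishes identically on J (equivalently, f is affine on I or g is affine on J). -/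
open Set

/-- A quadratic vanishing at three distinct points has all coefficients zero. -/
private lemma quad3_aux {α β γ t₁ t₂ t₃ : ℝ}
    (h1 : α * t₁ ^ 2 + β * t₁ + γ = 0) (h2 : α * t₂ ^ 2 + β * t₂ + γ = 0)
    (h3 : α * t₃ ^ 2 + β * t₃ + γ = 0)
    (h12 : t₁ ≠ t₂) (h13 : t₁ ≠ t₃) (h23 : t₂ ≠ t₃) : α = 0 ∧ β = 0 ∧ γ = 0 := by
  have d12 : t₁ - t₂ ≠ 0 := sub_ne_zero.mpr h12
  have d13 : t₁ - t₃ ≠ 0 := sub_ne_zero.mpr h13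
  have d23 : t₂ - t₃ ≠ 0 := sub_ne_zero.mpr h23
  have e12 : α * (t₁ + t₂) + β = 0 := by
    have h : (t₁ - t₂) * (α * (t₁ + t₂) + β) = 0 := by linear_combination h1 - h2
    exact (mul_eq_zero.mp h).resolve_left d12
  have e13 : α * (t₁ + t₃) + β = 0 := by
    have h : (t₁ - t₃) * (α * (t₁ + t₃) + β) = 0 := by linear_combination h1 - h3
    exact (mul_eq_zero.mp h).resolve_left d13
  have hα : α = 0 := by
    have h : α * (t₂ - t₃) = 0 := by linear_combination e12 - e13
    exact (mul_eq_zero.mp h).resolve_right d23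
  have hβ : β = 0 := by linear_combination e12 - (t₁ + t₂) * hα
  exact ⟨hα, hβ, by linear_combination h1 - t₁ ^ 2 * hα - t₁ * hβ⟩

/-- The key algebraic lemma: the separated curvature identity
`c (s+t-1)² + (s+t-1) = 2pq - pt - qs` cannot hold on `S × T` if `s` takes three
distinct values on `S` and `t` takes three distinct values on `T`. -/
private lemma key_lemma (c : ℝ) (S T : Set ℝ) (s p t q : ℝ → ℝ)
    (E : ∀ x ∈ S, ∀ y ∈ T,
      c * (s x + t y - 1) ^ 2 + (s x + t y - 1)
        = 2 * p x * q y - p x * t y - q y * s x)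
    {x₁ x₂ x₃ : ℝ} (hx₁ : x₁ ∈ S) (hx₂ : x₂ ∈ S) (hx₃ : x₃ ∈ S)
    (hs12 : s x₁ ≠ s x₂) (hs13 : s x₁ ≠ s x₃) (hs23 : s x₂ ≠ s x₃)
    {y₁ y₂ y₃ : ℝ} (hy₁ : y₁ ∈ T) (hy₂ : y₂ ∈ T) (hy₃ : y₃ ∈ T)
    (ht12 : t y₁ ≠ t y₂) (ht13 : t y₁ ≠ t y₃) (ht23 : t y₂ ≠ t y₃) : False := by
  by_cases hP : ∃ a ∈ S, ∃ b ∈ S, 2 * p a - s a ≠ 2 * p b - s b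
  · -- Case A : `2p - s` is non-constant on `S`.
    obtain ⟨a, ha, b, hb, hab⟩ := hP
    have hA0 : 2 * (p a - p b) - (s a - s b) ≠ 0 := by
      intro h; exact hab (by linarith [sub_eq_zero.mp h])
    obtain ⟨l, hl⟩ : ∃ l : ℝ, l = ((p a - p b) + 2 * c * (s a - s b)) /
        (2 * (p a - p b) - (s a - s b)) := ⟨_, rfl⟩
    -- `q` is an affine function of `t` on `T`.
    have hq : ∀ y ∈ T, ∀ y' ∈ T, q y - q y' = l * (t y - t y') := by
      intro y hy y' hy'
      have h1 := E a ha y hy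
      have h2 := E a ha y' hy'
      have h3 := E b hb y hy
      have h4 := E b hb y' hy'
      have hDD : (q y - q y') * (2 * (p a - p b) - (s a - s b))
          = (t y - t y') * ((p a - p b) + 2 * c * (s a - s b)) := by
        linear_combination h2 + h3 - h1 - h4
      rw [hl, div_mul_eq_mul_div, eq_div_iff hA0]
      linear_combination hDD
    obtain ⟨μ, hμ⟩ : ∃ μ : ℝ, μ = q y₁ - l * t y₁ := ⟨_, rfl⟩
    have hqy : ∀ y ∈ T, q y = l * t y + μ := by
      intro y hy
      have := hq y hy y₁ hy₁
      rw [hμ]; linarith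
    -- For each `x`, a quadratic in `t` vanishes at three distinct values.
    have hquad : ∀ x ∈ S, c = 0 ∧
        (2 * c * (s x - 1) + 1 + p x - 2 * p x * l + l * s x) = 0 ∧
        (c * (s x - 1) ^ 2 + s x - 1 - 2 * p x * μ + μ * s x) = 0 := by
      intro x hx
      have hv : ∀ y ∈ T,
          c * (t y) ^ 2 + (2 * c * (s x - 1) + 1 + p x - 2 * p x * l + l * s x) * t y
            + (c * (s x - 1) ^ 2 + s x - 1 - 2 * p x * μ + μ * s x) = 0 := by
        intro y hy
        linear_combination E x hx y hy + (2 * p x - s x) * hqy y hy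
      exact quad3_aux (hv y₁ hy₁) (hv y₂ hy₂) (hv y₃ hy₃) ht12 ht13 ht23
    obtain ⟨hc, hb1, hg1⟩ := hquad x₁ hx₁
    obtain ⟨-, hb2, hg2⟩ := hquad x₂ hx₂
    rw [hc] at hb1 hg1 hb2 hg2
    -- With c = 0 : 1 + p = l(2p - s) and s - 1 = μ(2p - s); hence
    -- 3 = (2p - s)(2l - 1 - μ) for each x, and s = μ(2p-s) + 1.
    have k1 : (3 : ℝ) = (2 * p x₁ - s x₁) * (2 * l - 1 - μ) := by
      linear_combination 2 * hb1 - hg1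
    have k2 : (3 : ℝ) = (2 * p x₂ - s x₂) * (2 * l - 1 - μ) := by
      linear_combination 2 * hb2 - hg2
    have hD : μ * (2 * p x₁ - s x₁) ≠ μ * (2 * p x₂ - s x₂) := by
      intro h
      apply hs12
      have e1 : s x₁ - 1 = μ * (2 * p x₁ - s x₁) := by linear_combination hg1
      have e2 : s x₂ - 1 = μ * (2 * p x₂ - s x₂) := by linear_combination hg2
      linarith [e1, e2, h]
    have hDne : (2 * p x₁ - s x₁) ≠ (2 * p x₂ - s x₂) := by
      intro h; exact hD (by rw [h])
    have h0 : (2 * l - 1 - μ) = 0 := by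
      have := sub_ne_zero.mpr hDne
      have h : ((2 * p x₁ - s x₁) - (2 * p x₂ - s x₂)) * (2 * l - 1 - μ) = 0 := by
        linear_combination k2 - k1
      exact (mul_eq_zero.mp h).resolve_left this
    rw [h0, mul_zero] at k1
    norm_num at k1
  · -- Case B : `2p - s` is constant on `S`.
    push_neg at hP
    -- single-difference identity, for any x-pair and any y
    have hsd : ∀ xa ∈ S, ∀ xb ∈ S, ∀ y ∈ T,
        (s xa - s xb) * (c * (s xa + s xb + 2 * t y - 2) + 1 + t y / 2) = 0 := by
      intro xa hxa xb hxb y hy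
      have h1 := E xa hxa y hy
      have h2 := E xb hxb y hy
      have hpc := hP xa hxa xb hxb
      linear_combination h1 - h2 + (q y - t y / 2) * hpc
    have hF : ∀ xa ∈ S, ∀ xb ∈ S, s xa ≠ s xb → ∀ y ∈ T,
        c * (s xa + s xb + 2 * t y - 2) + 1 + t y / 2 = 0 := by
      intro xa hxa xb hxb hne y hy
      have := hsd xa hxa xb hxb y hy
      exact (mul_eq_zero.mp this).resolve_left (sub_ne_zero.mpr hne)
    have F1 := hF x₁ hx₁ x₂ hx₂ hs12 y₁ hy₁
    have F2 := hF x₁ hx₁ x₂ hx₂ hs12 y₂ hy₂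
    have hc : c = -1/4 := by
      have h : (t y₁ - t y₂) * (2 * c + 1 / 2) = 0 := by linear_combination F1 - F2
      have := (mul_eq_zero.mp h).resolve_left (sub_ne_zero.mpr ht12)
      linarith
    rw [hc] at F1
    have F3 := hF x₁ hx₁ x₃ hx₃ hs13 y₁ hy₁
    rw [hc] at F3
    -- s x₁ + s x₂ = 6 = s x₁ + s x₃, contradiction with s x₂ ≠ s x₃
    exact hs23 (by linarith)

/-- If a continuous function on an ord-connected set takes two distinct values,
its square takes two distinct values. -/
private lemma sq_two_values {S : Set ℝ} (hS : OrdConnected S) {u : ℝ → ℝ}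
    (hu : ContinuousOn u S) {a b : ℝ} (ha : a ∈ S) (hb : b ∈ S)
    (hne : u a ≠ u b) : ∃ z ∈ S, ∃ w ∈ S, u z ^ 2 ≠ u w ^ 2 := by
  by_cases h : u a ^ 2 = u b ^ 2
  · -- then u a = - u b with both nonzero; IVT yields a zero of u in between
    have hsum : u a + u b = 0 := by
      have : (u a - u b) * (u a + u b) = 0 := by linear_combination h
      exact (mul_eq_zero.mp this).resolve_left (sub_ne_zero.mpr hne)
    have ha0 : u a ≠ 0 := by
      intro h0
      apply hne; rw [h0]; linarith
    have hsub : uIcc a b ⊆ S := hS.uIcc_subset ha hb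
    have hmem : (0 : ℝ) ∈ uIcc (u a) (u b) := by
      rcases le_total (u a) 0 with h' | h'
      · exact mem_uIcc.mpr (Or.inl ⟨h', by linarith⟩)
      · exact mem_uIcc.mpr (Or.inr ⟨by linarith, h'⟩)
    obtain ⟨z, hz, hz0⟩ := intermediate_value_uIcc (hu.mono hsub) hmem
    refine ⟨a, ha, z, hsub hz, ?_⟩
    rw [hz0]
    simpa using pow_ne_zero 2 ha0
  · exact ⟨a, ha, b, hb, h⟩

/-- A continuous function taking two distinct values on an ord-connected set
takes three pairwise distinct values. -/
private lemma three_values {S : Set ℝ} (hS : OrdConnected S) {s : ℝ → ℝ}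
    (hs : ContinuousOn s S) {a b : ℝ} (ha : a ∈ S) (hb : b ∈ S)
    (hne : s a ≠ s b) :
    ∃ x₁ ∈ S, ∃ x₂ ∈ S, ∃ x₃ ∈ S, s x₁ ≠ s x₂ ∧ s x₁ ≠ s x₃ ∧ s x₂ ≠ s x₃ := by
  have hsub : uIcc a b ⊆ S := hS.uIcc_subset ha hb
  have hmem : (s a + s b) / 2 ∈ uIcc (s a) (s b) := by
    rcases le_total (s a) (s b) with h | h
    · rw [uIcc_of_le h]; constructor <;> linarith
    · rw [uIcc_of_ge h]; constructor <;> linarith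
  obtain ⟨z, hz, hzv⟩ := intermediate_value_uIcc (hs.mono hsub) hmem
  refine ⟨a, ha, b, hb, z, hsub hz, hne, ?_, ?_⟩
  · rw [hzv]; intro h; apply hne; linarith
  · rw [hzv]; intro h; apply hne; linarith

/-- If the second derivative is nonzero somewhere on an open interval, the derivative
takes two distinct values there. -/
private lemma deriv_two_values {f : ℝ → ℝ} {a b x₀ : ℝ} (hx₀ : x₀ ∈ Ioo a b)
    (hp : deriv (deriv f) x₀ ≠ 0) :
    ∃ z ∈ Ioo a b, ∃ w ∈ Ioo a b, deriv f z ≠ deriv f w := by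
  by_contra h
  push_neg at h
  apply hp
  have hev : deriv f =ᶠ[nhds x₀] fun _ => deriv f x₀ := by
    filter_upwards [isOpen_Ioo.mem_nhds hx₀] with x hx
    exact h x hx x₀ hx₀
  rw [hev.deriv_eq, deriv_const]

/-- For a translation surface `z = f(x) + g(y)` with constant sectional curvature `K₀/2`
with respect to the canonical snm-connection, `f` or `g` is affine. -/
theorem translation_surface_type1_constant_curvature_is_cylinder
    (f g : ℝ → ℝ) (K₀ : ℝ) (a b c d : ℝ) (hab : a < b) (hcd : c < d)
    (hf : ContDiffOn ℝ (⊤ : ℕ∞) f (Ioo a b))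
    (hg : ContDiffOn ℝ (⊤ : ℕ∞) g (Ioo c d))
    (heq : ∀ x ∈ Ioo a b, ∀ y ∈ Ioo c d,
      (1 + deriv f x ^ 2 + deriv g y ^ 2) ^ 2 * K₀ =
        (1 + deriv f x ^ 2 + deriv g y ^ 2) * (deriv f x ^ 2 + deriv g y ^ 2)
          + deriv (deriv f) x * (deriv (deriv g) y - deriv g y ^ 2 - 1)
          + deriv (deriv g) y * (deriv (deriv f) x - deriv f x ^ 2 - 1)) :
    (∀ x ∈ Ioo a b, deriv (deriv f) x = 0) ∨ (∀ y ∈ Ioo c d, deriv (deriv g) y = 0) := by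
  by_contra hcon
  push_neg at hcon
  obtain ⟨⟨x₀, hx₀, hp₀⟩, ⟨y₀, hy₀, hq₀⟩⟩ := hcon
  -- continuity of the first derivatives
  have huc : ContinuousOn (deriv f) (Ioo a b) :=
    hf.continuousOn_deriv_of_isOpen isOpen_Ioo (by simp)
  have hvc : ContinuousOn (deriv g) (Ioo c d) :=
    hg.continuousOn_deriv_of_isOpen isOpen_Ioo (by simp)
  -- continuity of s = 1 + (deriv f)^2, t = 1 + (deriv g)^2
  have hsc : ContinuousOn (fun x => 1 + deriv f x ^ 2) (Ioo a b) := by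
    exact continuousOn_const.add (huc.pow 2)
  have htc : ContinuousOn (fun y => 1 + deriv g y ^ 2) (Ioo c d) := by
    exact continuousOn_const.add (hvc.pow 2)
  -- s takes three distinct values
  obtain ⟨z, hz, w, hw, hzw⟩ := deriv_two_values hx₀ hp₀
  obtain ⟨z', hz', w', hw', hzw'⟩ := sq_two_values ordConnected_Ioo huc hz hw hzw
  have hzw'' : (fun x => 1 + deriv f x ^ 2) z' ≠ (fun x => 1 + deriv f x ^ 2) w' := by
    simpa using fun h => hzw' (by linarith)
  obtain ⟨x₁, hx₁, x₂, hx₂, x₃, hx₃, hs12, hs13, hs23⟩ :=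
    three_values ordConnected_Ioo hsc hz' hw' hzw''
  -- t takes three distinct values
  obtain ⟨zg, hzg, wg, hwg, hzwg⟩ := deriv_two_values hy₀ hq₀
  obtain ⟨zg', hzg', wg', hwg', hzwg'⟩ := sq_two_values ordConnected_Ioo hvc hzg hwg hzwg
  have hzwg'' : (fun y => 1 + deriv g y ^ 2) zg' ≠ (fun y => 1 + deriv g y ^ 2) wg' := by
    simpa using fun h => hzwg' (by linarith)
  obtain ⟨y₁, hy₁, y₂, hy₂, y₃, hy₃, ht12, ht13, ht23⟩ :=
    three_values ordConnected_Ioo htc hzg' hwg' hzwg''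
  -- the separated form of the curvature identity
  have E : ∀ x ∈ Ioo a b, ∀ y ∈ Ioo c d,
      (K₀ - 1) * ((1 + deriv f x ^ 2) + (1 + deriv g y ^ 2) - 1) ^ 2
          + ((1 + deriv f x ^ 2) + (1 + deriv g y ^ 2) - 1)
        = 2 * deriv (deriv f) x * deriv (deriv g) y
          - deriv (deriv f) x * (1 + deriv g y ^ 2)
          - deriv (deriv g) y * (1 + deriv f x ^ 2) := by
    intro x hx y hy
    linear_combination heq x hx y hy
  exact key_lemma (K₀ - 1) (Ioo a b) (Ioo c d)
    (fun x => 1 + deriv f x ^ 2) (deriv (deriv f))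
    (fun y => 1 + deriv g y ^ 2) (deriv (deriv g))
    E hx₁ hx₂ hx₃ hs12 hs13 hs23 hy₁ hy₂ hy₃ ht12 ht13 ht23
end

section
/- Let I, J ⊆ ℝ be nonempty open intervals, let f : ℝ → ℝ and g : ℝ → ℝ be C^∞ on I and J respectively, and let K₀ ∈ ℝ. Suppose that for all y ∈ I and z ∈ J, setting w = 1 + f'(y)² + g'(z)², one has w²·K₀ = w·(1 + f'(y)²) + f''(y)·(g''(z) − g'(z)² − 1) + g''(z)·(f''(y) − f'(y)² − 1). Then f'' vanishes identically on I or g'' vanishes identically on J (equivalently, f is affine on I or g is affine on J). -/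
open Set

/-- A quadratic vanishing at three distinct points has zero leading coefficient. -/
lemma quad3 {c₂ c₁ c₀ x₁ x₂ x₃ : ℝ} (h12 : x₁ ≠ x₂) (h13 : x₁ ≠ x₃) (h23 : x₂ ≠ x₃)
    (e₁ : c₂ * x₁ ^ 2 + c₁ * x₁ + c₀ = 0) (e₂ : c₂ * x₂ ^ 2 + c₁ * x₂ + c₀ = 0)
    (e₃ : c₂ * x₃ ^ 2 + c₁ * x₃ + c₀ = 0) : c₂ = 0 := by
  have h : c₂ * ((x₁ - x₂) * ((x₁ - x₃) * (x₂ - x₃))) = 0 := by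
    linear_combination (x₂ - x₃) * e₁ - (x₁ - x₃) * e₂ + (x₁ - x₂) * e₃
  rcases mul_eq_zero.1 h with h | h
  · exact h
  · exact absurd h (by
      simp [sub_ne_zero.2 h12, sub_ne_zero.2 h13, sub_ne_zero.2 h23])

/-- If a continuous function on an interval has constant square, it is constant. -/
lemma const_of_sq_const {φ : ℝ → ℝ} {a b : ℝ} (hφ : ContinuousOn φ (Ioo a b))
    {y₀ : ℝ} (hy₀ : y₀ ∈ Ioo a b) (hsq : ∀ y ∈ Ioo a b, φ y ^ 2 = φ y₀ ^ 2) :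
    ∀ y ∈ Ioo a b, φ y = φ y₀ := by
  intro y hy
  by_contra hne
  have h2 := hsq y hy
  have hneg : φ y = -φ y₀ := by
    have : (φ y - φ y₀) * (φ y + φ y₀) = 0 := by linear_combination h2
    rcases mul_eq_zero.1 this with h | h
    · exact absurd (by linarith) hne
    · linarith
  have h0 : φ y₀ ≠ 0 := fun h => hne (by rw [hneg, h, neg_zero])
  have hsub : uIcc y₀ y ⊆ Ioo a b := (ordConnected_Ioo).uIcc_subset hy₀ hy
  have hmem : (0 : ℝ) ∈ uIcc (φ y₀) (φ y) := by
    rw [hneg]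
    rcases lt_or_gt_of_ne h0 with h | h
    · exact mem_uIcc.2 (Or.inl ⟨by linarith, by linarith⟩)
    · exact mem_uIcc.2 (Or.inr ⟨by linarith, by linarith⟩)
  obtain ⟨y₃, hy₃, hval⟩ := intermediate_value_uIcc (hφ.mono hsub) hmem
  have := hsq y₃ (hsub hy₃)
  rw [hval] at this
  exact h0 (by nlinarith)

/-- If the derivative is constant on an open interval, the second derivative vanishes. -/
lemma deriv2_zero {f : ℝ → ℝ} {a b c : ℝ} (h : ∀ y ∈ Ioo a b, deriv f y = c) :
    ∀ y ∈ Ioo a b, deriv (deriv f) y = 0 := by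
  intro y hy
  have hev : deriv f =ᶠ[nhds y] fun _ => c :=
    Filter.eventually_of_mem (isOpen_Ioo.mem_nhds hy) (fun x hx => h x hx)
  rw [hev.deriv_eq, deriv_const]

/-- A continuous function taking two values takes a third (middle) value. -/
lemma three_values_s1 {φ : ℝ → ℝ} {a b y₁ y₂ : ℝ} (hφ : ContinuousOn φ (Ioo a b))
    (h₁ : y₁ ∈ Ioo a b) (h₂ : y₂ ∈ Ioo a b) (hne : φ y₁ ≠ φ y₂) :
    ∃ y₃ ∈ Ioo a b, φ y₃ ≠ φ y₁ ∧ φ y₃ ≠ φ y₂ := by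
  have hsub : uIcc y₁ y₂ ⊆ Ioo a b := (ordConnected_Ioo).uIcc_subset h₁ h₂
  have hmem : (φ y₁ + φ y₂) / 2 ∈ uIcc (φ y₁) (φ y₂) := by
    rcases lt_or_gt_of_ne hne with h | h
    · exact mem_uIcc.2 (Or.inl ⟨by linarith, by linarith⟩)
    · exact mem_uIcc.2 (Or.inr ⟨by linarith, by linarith⟩)
  obtain ⟨y₃, hy₃, hval⟩ := intermediate_value_uIcc (hφ.mono hsub) hmem
  refine ⟨y₃, hsub hy₃, ?_, ?_⟩
  · rw [hval]; intro h; apply hne; linarith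
  · rw [hval]; intro h; apply hne; linarith


/-- Extraction of an affine relation `Q = l*B + m` from the subtracted curvature equations. -/
lemma affine_extract {K₀ c₂ c₁ : ℝ} {Bv Qv : ℝ → ℝ} {T : Set ℝ}
    {X₁ X₂ X₃ Y₁ Y₂ Y₃ z₁ z₂ : ℝ}
    (hc : K₀ = 1 / 4 → c₂ ≠ 0)
    (hz₁ : z₁ ∈ T) (hz₂ : z₂ ∈ T)
    (h12 : X₁ ≠ X₂) (h13 : X₁ ≠ X₃) (h23 : X₂ ≠ X₃)
    (hB : Bv z₁ ≠ Bv z₂)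
    (H12 : ∀ z ∈ T, ((2 * K₀ - 1) * (X₁ - X₂) + (Y₁ - Y₂)) * Bv z
        + ((X₁ - X₂) - 2 * (Y₁ - Y₂)) * Qv z
        + (c₂ * (X₁ ^ 2 - X₂ ^ 2) + c₁ * (X₁ - X₂)) = 0)
    (H13 : ∀ z ∈ T, ((2 * K₀ - 1) * (X₁ - X₃) + (Y₁ - Y₃)) * Bv z
        + ((X₁ - X₃) - 2 * (Y₁ - Y₃)) * Qv z
        + (c₂ * (X₁ ^ 2 - X₃ ^ 2) + c₁ * (X₁ - X₃)) = 0) :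
    ∃ l m : ℝ, ∀ z ∈ T, Qv z = l * Bv z + m := by
  -- generic treatment of one pair
  have key : ∀ X Y : ℝ, X₁ ≠ X →
      (∀ z ∈ T, ((2 * K₀ - 1) * (X₁ - X) + (Y₁ - Y)) * Bv z
        + ((X₁ - X) - 2 * (Y₁ - Y)) * Qv z
        + (c₂ * (X₁ ^ 2 - X ^ 2) + c₁ * (X₁ - X)) = 0) →
      (∃ l m : ℝ, ∀ z ∈ T, Qv z = l * Bv z + m) ∨
        (K₀ = 1 / 4 ∧ c₂ * (X₁ ^ 2 - X ^ 2) + c₁ * (X₁ - X) = 0) := by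
    intro X Y hne H
    set α := (2 * K₀ - 1) * (X₁ - X) + (Y₁ - Y) with hα_def
    set β := (X₁ - X) - 2 * (Y₁ - Y) with hβ_def
    set γ := c₂ * (X₁ ^ 2 - X ^ 2) + c₁ * (X₁ - X) with hγ_def
    by_cases hβ : β = 0
    · by_cases hα : α = 0
      · right
        constructor
        · have hK : (4 * K₀ - 1) * (X₁ - X) = 0 := by
            linear_combination 2 * hα + hβ
          rcases mul_eq_zero.1 hK with h | h
          · linarith
          · exact absurd (by linarith : X₁ = X) hne
        · have := H z₁ hz₁
          rw [hα, hβ] at this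
          linarith
      · exfalso
        apply hB
        have e₁ := H z₁ hz₁; have e₂ := H z₂ hz₂
        rw [hβ] at e₁ e₂
        have : α * Bv z₁ = α * Bv z₂ := by linarith
        exact mul_left_cancel₀ hα this
    · left
      refine ⟨-α / β, -γ / β, fun z hz => ?_⟩
      have h := H z hz
      rw [div_mul_eq_mul_div, ← add_div, eq_div_iff hβ]
      linear_combination h
  rcases key X₂ Y₂ h12 H12 with h | ⟨hK, hγ12⟩
  · exact h
  rcases key X₃ Y₃ h13 H13 with h | ⟨_, hγ13⟩
  · exact h
  -- degenerate case: c₂ = 0 from quad3, contradicting hc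
  exfalso
  apply hc hK
  have e₁ : c₂ * X₁ ^ 2 + c₁ * X₁ + (-(c₂ * X₁ ^ 2) - c₁ * X₁) = 0 := by ring
  have e₂ : c₂ * X₂ ^ 2 + c₁ * X₂ + (-(c₂ * X₁ ^ 2) - c₁ * X₁) = 0 := by
    linear_combination -hγ12
  have e₃ : c₂ * X₃ ^ 2 + c₁ * X₃ + (-(c₂ * X₁ ^ 2) - c₁ * X₁) = 0 := by
    linear_combination -hγ13
  exact quad3 h12 h13 h23 e₁ e₂ e₃

/-- For a translation surface `x = f(y) + g(z)` with constant sectional curvature `K₀/2`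
with respect to the canonical snm-connection, `f` or `g` is affine. -/
theorem translation_surface_type2_constant_curvature_is_cylinder
    (f g : ℝ → ℝ) (K₀ : ℝ) (a b c d : ℝ) (hab : a < b) (hcd : c < d)
    (hf : ContDiffOn ℝ (⊤ : ℕ∞) f (Ioo a b))
    (hg : ContDiffOn ℝ (⊤ : ℕ∞) g (Ioo c d))
    (heq : ∀ y ∈ Ioo a b, ∀ z ∈ Ioo c d,
      (1 + deriv f y ^ 2 + deriv g z ^ 2) ^ 2 * K₀ =
        (1 + deriv f y ^ 2 + deriv g z ^ 2) * (1 + deriv f y ^ 2)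
          + deriv (deriv f) y * (deriv (deriv g) z - deriv g z ^ 2 - 1)
          + deriv (deriv g) z * (deriv (deriv f) y - deriv f y ^ 2 - 1)) :
    (∀ y ∈ Ioo a b, deriv (deriv f) y = 0) ∨ (∀ z ∈ Ioo c d, deriv (deriv g) z = 0) := by
  by_contra hcon
  push_neg at hcon
  obtain ⟨⟨y₀, hy₀, hP₀⟩, ⟨z₀, hz₀, hQ₀⟩⟩ := hcon
  have hfd : ContinuousOn (deriv f) (Ioo a b) :=
    hf.continuousOn_deriv_of_isOpen isOpen_Ioo (by simp)
  have hgd : ContinuousOn (deriv g) (Ioo c d) :=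
    hg.continuousOn_deriv_of_isOpen isOpen_Ioo (by simp)
  have hAc : ContinuousOn (fun y => 1 + deriv f y ^ 2) (Ioo a b) :=
    continuousOn_const.add (hfd.pow 2)
  have hBc : ContinuousOn (fun z => 1 + deriv g z ^ 2) (Ioo c d) :=
    continuousOn_const.add (hgd.pow 2)
  -- A is nonconstant
  have hAnc : ∃ y₁ ∈ Ioo a b, ∃ y₂ ∈ Ioo a b,
      (1 + deriv f y₁ ^ 2) ≠ (1 + deriv f y₂ ^ 2) := by
    by_contra hcon
    push_neg at hcon
    have hsq : ∀ y ∈ Ioo a b, deriv f y ^ 2 = deriv f y₀ ^ 2 := fun y hy => by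
      have := hcon y hy y₀ hy₀; linarith
    exact hP₀ (deriv2_zero (const_of_sq_const hfd hy₀ hsq) y₀ hy₀)
  have hBnc : ∃ z₁ ∈ Ioo c d, ∃ z₂ ∈ Ioo c d,
      (1 + deriv g z₁ ^ 2) ≠ (1 + deriv g z₂ ^ 2) := by
    by_contra hcon
    push_neg at hcon
    have hsq : ∀ z ∈ Ioo c d, deriv g z ^ 2 = deriv g z₀ ^ 2 := fun z hz => by
      have := hcon z hz z₀ hz₀; linarith
    exact hQ₀ (deriv2_zero (const_of_sq_const hgd hz₀ hsq) z₀ hz₀)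
  obtain ⟨y₁, hy₁, y₂, hy₂, hA12⟩ := hAnc
  obtain ⟨z₁, hz₁, z₂, hz₂, hB12⟩ := hBnc
  obtain ⟨y₃, hy₃, hA31, hA32⟩ := three_values_s1 hAc hy₁ hy₂ hA12
  obtain ⟨z₃, hz₃, hB31, hB32⟩ := three_values_s1 hBc hz₁ hz₂ hB12
  -- Q is affine in B
  obtain ⟨l₂, m₂, hQaff⟩ :=
    affine_extract (K₀ := K₀) (c₂ := K₀ - 1) (c₁ := 1 - 2 * K₀)
      (Bv := fun z => 1 + deriv g z ^ 2) (Qv := fun z => deriv (deriv g) z)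
      (T := Ioo c d)
      (X₁ := 1 + deriv f y₁ ^ 2) (X₂ := 1 + deriv f y₂ ^ 2) (X₃ := 1 + deriv f y₃ ^ 2)
      (Y₁ := deriv (deriv f) y₁) (Y₂ := deriv (deriv f) y₂) (Y₃ := deriv (deriv f) y₃)
      (by intro h; rw [h]; norm_num)
      hz₁ hz₂ hA12 (Ne.symm hA31) (Ne.symm hA32) hB12
      (fun z hz => by linear_combination heq y₁ hy₁ z hz - heq y₂ hy₂ z hz)
      (fun z hz => by linear_combination heq y₁ hy₁ z hz - heq y₃ hy₃ z hz)
  -- P is affine in A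
  obtain ⟨l₁, m₁, hPaff⟩ :=
    affine_extract (K₀ := K₀) (c₂ := K₀) (c₁ := -(2 * K₀))
      (Bv := fun y => 1 + deriv f y ^ 2) (Qv := fun y => deriv (deriv f) y)
      (T := Ioo a b)
      (X₁ := 1 + deriv g z₁ ^ 2) (X₂ := 1 + deriv g z₂ ^ 2) (X₃ := 1 + deriv g z₃ ^ 2)
      (Y₁ := deriv (deriv g) z₁) (Y₂ := deriv (deriv g) z₂) (Y₃ := deriv (deriv g) z₃)
      (by intro h; rw [h]; norm_num)
      hy₁ hy₂ hB12 (Ne.symm hB31) (Ne.symm hB32) hA12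
      (fun y hy => by linear_combination heq y hy z₁ hz₁ - heq y hy z₂ hz₂)
      (fun y hy => by linear_combination heq y hy z₁ hz₁ - heq y hy z₃ hz₃)
  -- first quadratic: leading coefficient K₀ - 1 must vanish
  have e : ∀ y ∈ Ioo a b,
      (K₀ - 1) * (1 + deriv f y ^ 2) ^ 2
        + (2 * K₀ * (1 + deriv g z₁ ^ 2) - 2 * K₀ - (1 + deriv g z₁ ^ 2) + 1
            + deriv (deriv g) z₁ + l₁ * ((1 + deriv g z₁ ^ 2) - 2 * deriv (deriv g) z₁))
          * (1 + deriv f y ^ 2)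
        + (m₁ * ((1 + deriv g z₁ ^ 2) - 2 * deriv (deriv g) z₁)
            + K₀ * ((1 + deriv g z₁ ^ 2) - 1) ^ 2) = 0 := by
    intro y hy
    linear_combination heq y hy z₁ hz₁
      - ((1 + deriv g z₁ ^ 2) - 2 * deriv (deriv g) z₁) * hPaff y hy
  have hK1 : K₀ - 1 = 0 :=
    quad3 hA12 (Ne.symm hA31) (Ne.symm hA32) (e y₁ hy₁) (e y₂ hy₂) (e y₃ hy₃)
  -- second quadratic: leading coefficient K₀ must vanish
  have e' : ∀ z ∈ Ioo c d,
      K₀ * (1 + deriv g z ^ 2) ^ 2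
        + (2 * K₀ * (1 + deriv f y₁ ^ 2) - (1 + deriv f y₁ ^ 2) - 2 * K₀
            + deriv (deriv f) y₁ + l₂ * ((1 + deriv f y₁ ^ 2) - 2 * deriv (deriv f) y₁))
          * (1 + deriv g z ^ 2)
        + (m₂ * ((1 + deriv f y₁ ^ 2) - 2 * deriv (deriv f) y₁)
            + (K₀ - 1) * (1 + deriv f y₁ ^ 2) ^ 2 + (1 + deriv f y₁ ^ 2) + K₀
            - 2 * K₀ * (1 + deriv f y₁ ^ 2)) = 0 := by
    intro z hz
    linear_combination heq y₁ hy₁ z hz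
      - ((1 + deriv f y₁ ^ 2) - 2 * deriv (deriv f) y₁) * hQaff z hz
  have hK0 : K₀ = 0 :=
    quad3 hB12 (Ne.symm hB31) (Ne.symm hB32) (e' z₁ hz₁) (e' z₂ hz₂) (e' z₃ hz₃)
  linarith
end

section
/- There do not exist nonempty open intervals I, J ⊆ ℝ and functions f, g : ℝ → ℝ that are C^∞ on I and J respectively, with f'(x) ≠ 0, f''(x) ≠ 0 for all x ∈ I and g'(y) ≠ 0, g''(y) ≠ 0 for all y ∈ J, such that 1 + f'(x)² + g'(y)² = 2·f''(x)·g''(y) − (1 + g'(y)²)·f''(x) − (1 + f'(x)²)·g''(y) for all x ∈ I and y ∈ J. -/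
open Set

/-- The purely algebraic heart of the proof: evaluating the PDE at two `x`-points and
two `y`-points yields a contradiction. -/
lemma key_algebra (p1 p2 q1 q2 a1 a2 b1 b2 : ℝ)
    (hp1 : 0 < p1) (hp : p1 ≠ p2) (hq : q1 ≠ q2)
    (e11 : p1 * (1 + b1) + q1 * (1 + a1) = 1 + 2 * a1 * b1)
    (e12 : p1 * (1 + b2) + q2 * (1 + a1) = 1 + 2 * a1 * b2)
    (e21 : p2 * (1 + b1) + q1 * (1 + a2) = 1 + 2 * a2 * b1)
    (e22 : p2 * (1 + b2) + q2 * (1 + a2) = 1 + 2 * a2 * b2) : False := by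
  have hrne : q1 - q2 ≠ 0 := sub_ne_zero.mpr hq
  have hpne : p1 - p2 ≠ 0 := sub_ne_zero.mpr hp
  by_cases hs : b1 - b2 = 0
  · -- then both second-slot values coincide; forces a1 = a2 = -1, then 0 = 3
    have hb : b2 = b1 := by linarith [sub_eq_zero.mp hs]
    subst hb
    have h1 : (q1 - q2) * (1 + a1) = 0 := by linear_combination e11 - e12
    have h2 : (q1 - q2) * (1 + a2) = 0 := by linear_combination e21 - e22
    have ha1 : a1 = -1 := by
      rcases mul_eq_zero.mp h1 with h | h
      · exact absurd h hrne
      · linarith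
    have ha2 : a2 = -1 := by
      rcases mul_eq_zero.mp h2 with h | h
      · exact absurd h hrne
      · linarith
    subst ha1; subst ha2
    have h3 : (p1 - p2) * (1 + b2) = 0 := by linear_combination e11 - e21
    have hb1 : b2 = -1 := by
      rcases mul_eq_zero.mp h3 with h | h
      · exact absurd h hpne
      · linarith
    subst hb1
    linarith [e11]
  · by_cases ht : q1 - q2 - 2 * (b1 - b2) = 0
    · have h4 : (b1 - b2) * (p1 + 2) = 0 := by
        linear_combination e11 - e12 - (1 + a1) * ht
      rcases mul_eq_zero.mp h4 with h | h
      · exact hs h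
      · linarith
    · -- main case
      have h1 : a1 * (q1 - q2 - 2 * (b1 - b2)) = -(q1 - q2) - p1 * (b1 - b2) := by
        linear_combination e11 - e12
      have h2 : a2 * (q1 - q2 - 2 * (b1 - b2)) = -(q1 - q2) - p2 * (b1 - b2) := by
        linear_combination e21 - e22
      -- derive p_i * C + D = 0 where C, D don't depend on i
      have E1 : p1 * ((q1 - q2 - 2 * (b1 - b2)) * (1 + b1) - (b1 - b2) * q1
            + 2 * (b1 - b2) * b1)
          + (-2 * (b1 - b2) * q1 - (q1 - q2 - 2 * (b1 - b2)) + 2 * (q1 - q2) * b1) = 0 := by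
        linear_combination (q1 - q2 - 2 * (b1 - b2)) * e11 - (q1 - 2 * b1) * h1
      have E2 : p2 * ((q1 - q2 - 2 * (b1 - b2)) * (1 + b1) - (b1 - b2) * q1
            + 2 * (b1 - b2) * b1)
          + (-2 * (b1 - b2) * q1 - (q1 - q2 - 2 * (b1 - b2)) + 2 * (q1 - q2) * b1) = 0 := by
        linear_combination (q1 - q2 - 2 * (b1 - b2)) * e21 - (q1 - 2 * b1) * h2
      have hC : ((q1 - q2 - 2 * (b1 - b2)) * (1 + b1) - (b1 - b2) * q1
          + 2 * (b1 - b2) * b1) = 0 := by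
        have h5 : (p1 - p2) * ((q1 - q2 - 2 * (b1 - b2)) * (1 + b1) - (b1 - b2) * q1
            + 2 * (b1 - b2) * b1) = 0 := by linear_combination E1 - E2
        rcases mul_eq_zero.mp h5 with h | h
        · exact absurd h hpne
        · exact h
      have hD : (-2 * (b1 - b2) * q1 - (q1 - q2 - 2 * (b1 - b2)) + 2 * (q1 - q2) * b1) = 0 := by
        linear_combination E1 - p1 * hC
      have h6 : 3 * (q1 - q2 - 2 * (b1 - b2)) = 0 := by linear_combination 2 * hC - hD
      exact ht (by linarith)

/-- On an open interval where `deriv f` and `deriv (deriv f)` never vanish,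
`(deriv f) ^ 2` is not constant. -/
lemma exists_sq_ne (f : ℝ → ℝ) (a b : ℝ) (hab : a < b)
    (hf : ContDiffOn ℝ (⊤ : ℕ∞) f (Ioo a b))
    (hne : ∀ x ∈ Ioo a b, deriv f x ≠ 0 ∧ deriv (deriv f) x ≠ 0) :
    ∃ x₁ ∈ Ioo a b, ∃ x₂ ∈ Ioo a b, deriv f x₁ ^ 2 ≠ deriv f x₂ ^ 2 := by
  by_contra h
  push_neg at h
  set x₀ := (a + b) / 2 with hx₀def
  have hx₀ : x₀ ∈ Ioo a b := ⟨by simp [hx₀def]; linarith, by simp [hx₀def]; linarith⟩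
  have hmem : Ioo a b ∈ nhds x₀ := isOpen_Ioo.mem_nhds hx₀
  have hconst : (fun x => deriv f x ^ 2) =ᶠ[nhds x₀] fun _ => deriv f x₀ ^ 2 :=
    Filter.eventually_of_mem hmem fun x hx => h x hx x₀ hx₀
  have hd0 : deriv (fun x => deriv f x ^ 2) x₀ = 0 := by
    rw [hconst.deriv_eq]; exact deriv_const _ _
  have hdf : ContDiffOn ℝ 1 (deriv f) (Ioo a b) :=
    hf.deriv_of_isOpen isOpen_Ioo (by exact WithTop.coe_le_coe.mpr le_top)
  have hdiff : DifferentiableAt ℝ (deriv f) x₀ :=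
    (hdf.differentiableOn one_ne_zero).differentiableAt hmem
  have hHD : HasDerivAt (fun x => deriv f x ^ 2)
      (2 * deriv f x₀ ^ 1 * deriv (deriv f) x₀) x₀ := by
    simpa using hdiff.hasDerivAt.fun_pow 2
  have := hHD.deriv
  rw [hd0] at this
  have hF := (hne x₀ hx₀).1
  have hA := (hne x₀ hx₀).2
  have : 2 * deriv f x₀ ^ 1 * deriv (deriv f) x₀ ≠ 0 := by
    apply mul_ne_zero (mul_ne_zero two_ne_zero _) hA
    simpa using hF
  exact this (by linarith)

/-- The `K₀ = 1` subcase for translation surfaces `z = f(x) + g(y)`: there is no solution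
with `f'`, `f''`, `g'`, `g''` nowhere zero. -/
theorem no_type1_surface_K0_eq_one :
    ¬ ∃ (f g : ℝ → ℝ) (a b c d : ℝ), a < b ∧ c < d ∧
      ContDiffOn ℝ (⊤ : ℕ∞) f (Ioo a b) ∧ ContDiffOn ℝ (⊤ : ℕ∞) g (Ioo c d) ∧
      (∀ x ∈ Ioo a b, deriv f x ≠ 0 ∧ deriv (deriv f) x ≠ 0) ∧
      (∀ y ∈ Ioo c d, deriv g y ≠ 0 ∧ deriv (deriv g) y ≠ 0) ∧
      (∀ x ∈ Ioo a b, ∀ y ∈ Ioo c d,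
        1 + deriv f x ^ 2 + deriv g y ^ 2 =
          2 * deriv (deriv f) x * deriv (deriv g) y
            - (1 + deriv g y ^ 2) * deriv (deriv f) x
            - (1 + deriv f x ^ 2) * deriv (deriv g) y) := by
  rintro ⟨f, g, a, b, c, d, hab, hcd, hf, hg, hfne, hgne, heq⟩
  obtain ⟨x₁, hx₁, x₂, hx₂, hfx⟩ := exists_sq_ne f a b hab hf hfne
  obtain ⟨y₁, hy₁, y₂, hy₂, hgy⟩ := exists_sq_ne g c d hcd hg hgne
  -- reformulate the PDE: (1+f'²)(1+g'') + (1+g'²)(1+f'') = 1 + 2 f'' g''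
  have key : ∀ x ∈ Ioo a b, ∀ y ∈ Ioo c d,
      (1 + deriv f x ^ 2) * (1 + deriv (deriv g) y)
        + (1 + deriv g y ^ 2) * (1 + deriv (deriv f) x)
      = 1 + 2 * deriv (deriv f) x * deriv (deriv g) y := by
    intro x hx y hy
    linear_combination heq x hx y hy
  exact key_algebra (1 + deriv f x₁ ^ 2) (1 + deriv f x₂ ^ 2)
    (1 + deriv g y₁ ^ 2) (1 + deriv g y₂ ^ 2)
    (deriv (deriv f) x₁) (deriv (deriv f) x₂)
    (deriv (deriv g) y₁) (deriv (deriv g) y₂)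
    (by positivity)
    (by intro h; exact hfx (by linarith))
    (by intro h; exact hgy (by linarith))
    (by linear_combination key x₁ hx₁ y₁ hy₁)
    (by linear_combination key x₁ hx₁ y₂ hy₂)
    (by linear_combination key x₂ hx₂ y₁ hy₁)
    (by linear_combination key x₂ hx₂ y₂ hy₂)
end

section
/- Let K₀ ∈ ℝ with K₀ ≠ 1. There do not exist nonempty open intervals I, J ⊆ ℝ and functions P, Q : ℝ → ℝ that are C^∞ on I and J respectively, with P'(u) ≠ 0 for all u ∈ I and Q'(v) ≠ 0 for all v ∈ J, such that 4·( K₀ + (2K₀ − 1)(P(u) + Q(v)) + (K₀ − 1)(P(u)² + Q(v)²) + 2(K₀ − 1)·P(u)·Q(v) ) = P'(u)·(Q'(v) − 2Q(v) − 2) + Q'(v)·(P'(u) − 2P(u) − 2) for all u ∈ I and v ∈ J. -/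
open Set

/-- A continuous function on a nonempty open interval whose values all satisfy a fixed
quadratic equation with nonzero leading coefficient must be constant. -/
lemma quad_const {f : ℝ → ℝ} {a b e g h : ℝ} (he : e ≠ 0)
    (hf : ContinuousOn f (Ioo a b))
    (hroot : ∀ x ∈ Ioo a b, e * f x ^ 2 + g * f x + h = 0) :
    ∀ x ∈ Ioo a b, ∀ y ∈ Ioo a b, f x = f y := by
  intro x hx y hy
  by_contra hne
  set m : ℝ := (f x + f y) / 2 with hm
  have hsub : uIcc x y ⊆ Ioo a b := (ordConnected_Ioo).uIcc_subset hx hy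
  have hiv : uIcc (f x) (f y) ⊆ f '' uIcc x y :=
    intermediate_value_uIcc (hf.mono hsub)
  have hmem : m ∈ uIcc (f x) (f y) := by
    rcases le_total (f x) (f y) with hle | hle
    · rw [uIcc_of_le hle]; constructor <;> simp [hm] <;> linarith
    · rw [uIcc_of_ge hle]; constructor <;> simp [hm] <;> linarith
  obtain ⟨z, hz, hfz⟩ := hiv hmem
  have hzI : z ∈ Ioo a b := hsub hz
  have e1 := hroot x hx
  have e2 := hroot y hy
  have e3 := hroot z hzI
  rw [hfz] at e3
  have hxm : f x ≠ m := by
    intro hcon; apply hne; rw [hm] at hcon; linarith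
  have hym : f y ≠ m := by
    intro hcon; apply hne; rw [hm] at hcon; linarith
  have h1 : e * (f x + m) + g = 0 := by
    have hfac : (f x - m) * (e * (f x + m) + g) = 0 := by linear_combination e1 - e3
    rcases mul_eq_zero.mp hfac with h' | h'
    · exact absurd (sub_eq_zero.mp h') hxm
    · exact h'
  have h2 : e * (f y + m) + g = 0 := by
    have hfac : (f y - m) * (e * (f y + m) + g) = 0 := by linear_combination e2 - e3
    rcases mul_eq_zero.mp hfac with h' | h'
    · exact absurd (sub_eq_zero.mp h') hym
    · exact h'
  have h3 : e * (f x - f y) = 0 := by linear_combination h1 - h2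
  rcases mul_eq_zero.mp h3 with h' | h'
  · exact he h'
  · exact hne (sub_eq_zero.mp h')

/-- The derivative at the midpoint of a function constant on a nonempty open interval is zero. -/
lemma deriv_eq_zero_of_const {f : ℝ → ℝ} {a b : ℝ} (hab : a < b)
    (hconst : ∀ x ∈ Ioo a b, ∀ y ∈ Ioo a b, f x = f y) :
    deriv f ((a + b) / 2) = 0 := by
  have hx : (a + b) / 2 ∈ Ioo a b := ⟨by linarith, by linarith⟩
  have hev : f =ᶠ[nhds ((a + b) / 2)] fun _ => f ((a + b) / 2) := by
    filter_upwards [isOpen_Ioo.mem_nhds hx] with y hy using hconst y hy _ hx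
  rw [hev.deriv_eq]
  exact deriv_const _ _

/-- The `K₀ ≠ 1` subcase for translation surfaces `z = f(x) + g(y)` in terms of
`P = f'²`, `Q = g'²`: the functional equation has no solution with `P'`, `Q'` nowhere zero. -/
theorem no_PQ_solution_K0_ne_one (K₀ : ℝ) (hK₀ : K₀ ≠ 1) :
    ¬ ∃ (P Q : ℝ → ℝ) (a b c d : ℝ), a < b ∧ c < d ∧
      ContDiffOn ℝ (⊤ : ℕ∞) P (Ioo a b) ∧ ContDiffOn ℝ (⊤ : ℕ∞) Q (Ioo c d) ∧
      (∀ u ∈ Ioo a b, deriv P u ≠ 0) ∧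
      (∀ v ∈ Ioo c d, deriv Q v ≠ 0) ∧
      (∀ u ∈ Ioo a b, ∀ v ∈ Ioo c d,
        4 * (K₀ + (2 * K₀ - 1) * (P u + Q v) + (K₀ - 1) * (P u ^ 2 + Q v ^ 2)
              + 2 * (K₀ - 1) * P u * Q v) =
          deriv P u * (deriv Q v - 2 * Q v - 2) + deriv Q v * (deriv P u - 2 * P u - 2)) := by
  rintro ⟨P, Q, a, b, c, d, hab, hcd, hPc, hQc, hP', hQ', heq⟩
  -- abbreviations
  set A : ℝ := 4 * (K₀ - 1) with hA_def
  set B : ℝ → ℝ := fun u => 4 * (2 * K₀ - 1) + 8 * (K₀ - 1) * P u + 2 * deriv P u with hB_def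
  set C : ℝ → ℝ := fun u => 2 * P u + 2 - 2 * deriv P u with hC_def
  set D : ℝ → ℝ := fun u => 4 * K₀ + 4 * (2 * K₀ - 1) * P u + 4 * (K₀ - 1) * P u ^ 2
      + 2 * deriv P u with hD_def
  have hA : A ≠ 0 := by
    simp only [hA_def]
    intro hcon
    apply hK₀
    linarith [hcon]
  -- the equation in separated form
  have hE : ∀ u ∈ Ioo a b, ∀ v ∈ Ioo c d,
      A * Q v ^ 2 + B u * Q v + C u * deriv Q v + D u = 0 := by
    intro u hu v hv
    have h := heq u hu v hv
    simp only [hA_def, hB_def, hC_def, hD_def]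
    linear_combination h
  have hv₀ : (c + d) / 2 ∈ Ioo c d := ⟨by linarith, by linarith⟩
  have hu₀ : (a + b) / 2 ∈ Ioo a b := ⟨by linarith, by linarith⟩
  -- Q cannot be constant, P cannot be constant
  have hQnc : ¬ (∀ x ∈ Ioo c d, ∀ y ∈ Ioo c d, Q x = Q y) := fun hcon =>
    hQ' _ hv₀ (deriv_eq_zero_of_const hcd hcon)
  have hPnc : ¬ (∀ x ∈ Ioo a b, ∀ y ∈ Ioo a b, P x = P y) := fun hcon =>
    hP' _ hu₀ (deriv_eq_zero_of_const hab hcon)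
  by_cases hC : ∀ u₁ ∈ Ioo a b, ∀ u₂ ∈ Ioo a b, C u₁ = C u₂
  · -- C constant in u
    by_cases hB : ∀ u₁ ∈ Ioo a b, ∀ u₂ ∈ Ioo a b, B u₁ = B u₂
    · -- B and C constant in u; then D is constant in u as well
      have hD : ∀ u₁ ∈ Ioo a b, ∀ u₂ ∈ Ioo a b, D u₁ = D u₂ := by
        intro u₁ hu₁ u₂ hu₂
        have h1 := hE u₁ hu₁ _ hv₀
        have h2 := hE u₂ hu₂ _ hv₀
        have hBe := hB u₁ hu₁ u₂ hu₂
        have hCe := hC u₁ hu₁ u₂ hu₂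
        linear_combination h1 - h2 - Q ((c + d) / 2) * hBe - deriv Q ((c + d) / 2) * hCe
      by_cases hK : K₀ = 3 / 4
      · -- K₀ = 3/4 : C + D = 5 + 4P − P² is constant, so P satisfies a quadratic
        apply hPnc
        apply quad_const (e := (-1 : ℝ))
          (g := (4 : ℝ)) (h := 5 - C ((a + b) / 2) - D ((a + b) / 2)) (by norm_num)
          hPc.continuousOn
        intro x hx
        have hCe := hC x hx _ hu₀
        have hDe := hD x hx _ hu₀
        simp only [hC_def, hD_def, hK] at hCe hDe ⊢
        linear_combination hCe + hDe
      · -- K₀ ≠ 3/4 : B + C constant gives (8K₀−6)·P constant, so P constant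
        apply hPnc
        intro x hx y hy
        have hBe := hB x hx y hy
        have hCe := hC x hx y hy
        have hkey : (8 * K₀ - 6) * (P x - P y) = 0 := by
          simp only [hB_def, hC_def] at hBe hCe
          linear_combination hBe + hCe
        rcases mul_eq_zero.mp hkey with h' | h'
        · exfalso; apply hK; linarith
        · exact sub_eq_zero.mp h'
    · -- B not constant: Q constant, contradiction
      push_neg at hB
      obtain ⟨u₁, hu₁, u₂, hu₂, hBne⟩ := hB
      apply hQnc
      intro v₁ hv₁ v₂ hv₂
      have hCe := hC u₁ hu₁ u₂ hu₂
      have h11 := hE u₁ hu₁ v₁ hv₁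
      have h21 := hE u₂ hu₂ v₁ hv₁
      have h12 := hE u₁ hu₁ v₂ hv₂
      have h22 := hE u₂ hu₂ v₂ hv₂
      have hkey : (B u₁ - B u₂) * (Q v₁ - Q v₂) = 0 := by
        linear_combination h11 - h21 - h12 + h22 - (deriv Q v₁ - deriv Q v₂) * hCe
      rcases mul_eq_zero.mp hkey with h' | h'
      · exact absurd (sub_eq_zero.mp h') hBne
      · exact sub_eq_zero.mp h'
  · -- C not constant: Q' is affine in Q, hence Q satisfies a quadratic, so Q constant
    push_neg at hC
    obtain ⟨u₁, hu₁, u₂, hu₂, hCne⟩ := hC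
    apply hQnc
    apply quad_const (e := (C u₁ - C u₂) * A) (g := C u₁ * B u₂ - C u₂ * B u₁)
      (h := C u₁ * D u₂ - C u₂ * D u₁)
      (mul_ne_zero (sub_ne_zero.mpr hCne) hA) hQc.continuousOn
    intro v hv
    have h1 := hE u₁ hu₁ v hv
    have h2 := hE u₂ hu₂ v hv
    linear_combination (- C u₂) * h1 + C u₁ * h2
end

section
/- There do not exist nonempty open intervals I, J ⊆ ℝ and functions f, g : ℝ → ℝ that are C^∞ on I and J respectively, with f'(y) ≠ 0, f''(y) ≠ 0 for all y ∈ I and g'(z) ≠ 0, g''(z) ≠ 0 for all z ∈ J, such that −1 − f'(y)² − g'(z)² + g''(z) = f''(y)·(2g''(z) − g'(z)² − 1)/(1 + f'(y)²) for all y ∈ I and z ∈ J. -/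
open Set

private lemma sq_const_deriv {h : ℝ → ℝ} {s : Set ℝ} (hs : IsOpen s) {x : ℝ} (hx : x ∈ s)
    {C : ℝ} (hc : ∀ y ∈ s, h y ^ 2 = C) (hd : DifferentiableAt ℝ h x) :
    h x * deriv h x = 0 := by
  have h1 : HasDerivAt (fun y => h y ^ 2) ((2 : ℝ) * h x ^ 1 * deriv h x) x := by
    simpa using hd.hasDerivAt.fun_pow 2
  have h2 : (fun y => h y ^ 2) =ᶠ[nhds x] fun _ => C :=
    Filter.eventuallyEq_of_mem (hs.mem_nhds hx) hc
  have h3 := h1.deriv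
  rw [h2.deriv_eq, deriv_const] at h3
  nlinarith [h3]

/-- The `K₀ = 0` subcase for translation surfaces `x = f(y) + g(z)`: there is no solution
with `f'`, `f''`, `g'`, `g''` nowhere zero. -/
theorem no_type2_surface_K0_eq_zero :
    ¬ ∃ (f g : ℝ → ℝ) (a b c d : ℝ), a < b ∧ c < d ∧
      ContDiffOn ℝ (⊤ : ℕ∞) f (Ioo a b) ∧ ContDiffOn ℝ (⊤ : ℕ∞) g (Ioo c d) ∧
      (∀ y ∈ Ioo a b, deriv f y ≠ 0 ∧ deriv (deriv f) y ≠ 0) ∧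
      (∀ z ∈ Ioo c d, deriv g z ≠ 0 ∧ deriv (deriv g) z ≠ 0) ∧
      (∀ y ∈ Ioo a b, ∀ z ∈ Ioo c d,
        -1 - deriv f y ^ 2 - deriv g z ^ 2 + deriv (deriv g) z =
          deriv (deriv f) y * (2 * deriv (deriv g) z - deriv g z ^ 2 - 1)
            / (1 + deriv f y ^ 2)) := by
  rintro ⟨f, g, a, b, c, d, hab, hcd, hf, hg, hfd, hgd, heq⟩
  obtain ⟨y0, hy0⟩ := nonempty_Ioo.2 hab
  obtain ⟨z0, hz0⟩ := nonempty_Ioo.2 hcd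
  -- differentiability of the first derivatives
  have hf' : ContDiffOn ℝ (⊤ : ℕ∞) (deriv f) (Ioo a b) := hf.deriv_of_isOpen isOpen_Ioo (by simp)
  have hg' : ContDiffOn ℝ (⊤ : ℕ∞) (deriv g) (Ioo c d) := hg.deriv_of_isOpen isOpen_Ioo (by simp)
  have hdf : DifferentiableAt ℝ (deriv f) y0 :=
    (hf'.contDiffAt (isOpen_Ioo.mem_nhds hy0)).differentiableAt (by simp)
  have hdg : DifferentiableAt ℝ (deriv g) z0 :=
    (hg'.contDiffAt (isOpen_Ioo.mem_nhds hz0)).differentiableAt (by simp)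
  have hden : ∀ y : ℝ, (1 : ℝ) + deriv f y ^ 2 ≠ 0 := fun y => by positivity
  by_cases hQ : ∀ z ∈ Ioo c d, 2 * deriv (deriv g) z - deriv g z ^ 2 - 1
      = 2 * deriv (deriv g) z0 - deriv g z0 ^ 2 - 1
  · -- Q constant: then g'' is constant and g'^2 is constant on J
    have hP : ∀ z ∈ Ioo c d, deriv (deriv g) z - deriv g z ^ 2
        = deriv (deriv g) z0 - deriv g z0 ^ 2 := by
      intro z hz
      have e := heq y0 hy0 z hz
      have e0 := heq y0 hy0 z0 hz0
      rw [hQ z hz] at e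
      have := hden y0
      field_simp at e e0
      nlinarith [this, sq_nonneg (deriv f y0), e, e0]
    have hv : ∀ z ∈ Ioo c d, deriv g z ^ 2 = deriv g z0 ^ 2 := by
      intro z hz
      have h1 := hP z hz
      have h2 := hQ z hz
      linarith
    have := sq_const_deriv isOpen_Ioo hz0 hv hdg
    rcases mul_eq_zero.1 this with h | h
    · exact (hgd z0 hz0).1 h
    · exact (hgd z0 hz0).2 h
  · -- Q nonconstant: separation of variables forces f'^2 constant on I
    push_neg at hQ
    obtain ⟨z1, hz1, hQ1⟩ := hQ
    set Q0 := 2 * deriv (deriv g) z0 - deriv g z0 ^ 2 - 1 with hQ0def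
    set Q1 := 2 * deriv (deriv g) z1 - deriv g z1 ^ 2 - 1 with hQ1def
    set P0 := deriv (deriv g) z0 - deriv g z0 ^ 2 - 1 with hP0def
    set P1 := deriv (deriv g) z1 - deriv g z1 ^ 2 - 1 with hP1def
    have hQne : Q1 - Q0 ≠ 0 := sub_ne_zero.2 hQ1
    have hu : ∀ y ∈ Ioo a b,
        deriv f y ^ 2 = (P0 * Q1 - P1 * Q0) / (Q1 - Q0) := by
      intro y hy
      have e0 := heq y hy z0 hz0
      have e1 := heq y hy z1 hz1
      have hd := hden y
      rw [eq_div_iff hd] at e0 e1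
      -- from (P0 - U)(1+U) = A Q0 and (P1 - U)(1+U) = A Q1 deduce
      -- (P0 - U)Q1 = (P1 - U)Q0, then solve for U
      have key : (P0 - deriv f y ^ 2) * Q1 = (P1 - deriv f y ^ 2) * Q0 := by
        have hc : ((P0 - deriv f y ^ 2) * Q1) * (1 + deriv f y ^ 2)
            = ((P1 - deriv f y ^ 2) * Q0) * (1 + deriv f y ^ 2) := by
          simp only [hP0def, hP1def, hQ0def, hQ1def]
          linear_combination (2 * deriv (deriv g) z1 - deriv g z1 ^ 2 - 1) * e0
            - (2 * deriv (deriv g) z0 - deriv g z0 ^ 2 - 1) * e1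
        exact mul_right_cancel₀ hd hc
      rw [eq_div_iff hQne]
      nlinarith [key]
    have := sq_const_deriv isOpen_Ioo hy0 hu hdf
    rcases mul_eq_zero.1 this with h | h
    · exact (hfd y0 hy0).1 h
    · exact (hfd y0 hy0).2 h
end

section
/- There do not exist nonempty open intervals I, J ⊆ ℝ and functions f, g : ℝ → ℝ that are C^∞ on I and J respectively, with f'(y) ≠ 0, f''(y) ≠ 0 for all y ∈ I and g'(z) ≠ 0, g''(z) ≠ 0 for all z ∈ J, such that g'(z)² + g''(z) + g'(z)⁴/(1 + f'(y)²) = f''(y)·(2g''(z) − g'(z)² − 1)/(1 + f'(y)²) for all y ∈ I and z ∈ J. -/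
open Set

/-- Algebraic core: the six cleared equations at two `y`-points and three `z`-points
are contradictory. -/
lemma no_type2_alg_core {u₁ u₂ v₁ v₂ w₁ w₂ w₃ s₁ s₂ s₃ : ℝ}
    (hu : u₁ ≠ u₂) (h12 : w₁ ≠ w₂) (h13 : w₁ ≠ w₃) (h23 : w₂ ≠ w₃) (hw1 : w₁ ≠ 0)
    (e11 : (w₁+s₁)*(1+u₁) + w₁^2 = v₁*(2*s₁-w₁-1))
    (e12 : (w₁+s₁)*(1+u₂) + w₁^2 = v₂*(2*s₁-w₁-1))
    (e21 : (w₂+s₂)*(1+u₁) + w₂^2 = v₁*(2*s₂-w₂-1))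
    (e22 : (w₂+s₂)*(1+u₂) + w₂^2 = v₂*(2*s₂-w₂-1))
    (e31 : (w₃+s₃)*(1+u₁) + w₃^2 = v₁*(2*s₃-w₃-1))
    (e32 : (w₃+s₃)*(1+u₂) + w₃^2 = v₂*(2*s₃-w₃-1)) : False := by
  have hΔu : u₁ - u₂ ≠ 0 := sub_ne_zero.mpr hu
  set Δu : ℝ := u₁ - u₂ with hΔudef
  set Δv : ℝ := v₁ - v₂ with hΔvdef
  set C : ℝ := v₁*Δu - Δv*(1+u₁) with hCdef
  have h1 : (w₁+s₁)*Δu = (2*s₁-w₁-1)*Δv := by linear_combination e11 - e12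
  have h2 : (w₂+s₂)*Δu = (2*s₂-w₂-1)*Δv := by linear_combination e21 - e22
  have h3 : (w₃+s₃)*Δu = (2*s₃-w₃-1)*Δv := by linear_combination e31 - e32
  have k1 : w₁^2*Δu = (2*s₁-w₁-1)*C := by linear_combination Δu*e11 - (1+u₁)*h1
  have k2 : w₂^2*Δu = (2*s₂-w₂-1)*C := by linear_combination Δu*e21 - (1+u₁)*h2
  have k3 : w₃^2*Δu = (2*s₃-w₃-1)*C := by linear_combination Δu*e31 - (1+u₁)*h3
  have m1 : (2*s₁-w₁-1)*(Δu-2*Δv) = -(3*w₁+1)*Δu := by linear_combination 2*h1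
  have m2 : (2*s₂-w₂-1)*(Δu-2*Δv) = -(3*w₂+1)*Δu := by linear_combination 2*h2
  have m3 : (2*s₃-w₃-1)*(Δu-2*Δv) = -(3*w₃+1)*Δu := by linear_combination 2*h3
  set A : ℝ := (Δu-2*Δv)*Δu with hAdef
  set B : ℝ := Δu*C with hBdef
  have G1 : w₁^2*A + 3*w₁*B + B = 0 := by linear_combination (Δu-2*Δv)*k1 + C*m1
  have G2 : w₂^2*A + 3*w₂*B + B = 0 := by linear_combination (Δu-2*Δv)*k2 + C*m2
  have G3 : w₃^2*A + 3*w₃*B + B = 0 := by linear_combination (Δu-2*Δv)*k3 + C*m3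
  have P12 : (w₁+w₂)*A + 3*B = 0 := by
    have h : (w₁-w₂)*((w₁+w₂)*A + 3*B) = 0 := by linear_combination G1 - G2
    rcases mul_eq_zero.mp h with h | h
    · exact absurd (sub_eq_zero.mp h) h12
    · exact h
  have P13 : (w₁+w₃)*A + 3*B = 0 := by
    have h : (w₁-w₃)*((w₁+w₃)*A + 3*B) = 0 := by linear_combination G1 - G3
    rcases mul_eq_zero.mp h with h | h
    · exact absurd (sub_eq_zero.mp h) h13
    · exact h
  have hA : A = 0 := by
    have h : (w₂-w₃)*A = 0 := by linear_combination P12 - P13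
    rcases mul_eq_zero.mp h with h | h
    · exact absurd (sub_eq_zero.mp h) h23
    · exact h
  have hB : B = 0 := by linarith [P12, hA, mul_eq_zero_of_right (w₁+w₂) hA]
  have hC : C = 0 := by
    rcases mul_eq_zero.mp hB with h | h
    · exact absurd h hΔu
    · exact h
  have : w₁^2*Δu = 0 := by rw [k1, hC, mul_zero]
  rcases mul_eq_zero.mp this with h | h
  · exact hw1 (pow_eq_zero_iff (two_ne_zero)|>.mp h)
  · exact hΔu h

/-- If `f' ≠ 0` and `f'' ≠ 0` on an open interval then `(f')²` is injective there. -/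
lemma inj_sq_deriv {f : ℝ → ℝ} {a b : ℝ} (hf : ContDiffOn ℝ (⊤ : ℕ∞) f (Ioo a b))
    (hfd : ∀ y ∈ Ioo a b, deriv f y ≠ 0 ∧ deriv (deriv f) y ≠ 0) :
    InjOn (fun y => (deriv f y)^2) (Ioo a b) := by
  have hdf : ContDiffOn ℝ (⊤ : ℕ∞) (deriv f) (Ioo a b) := hf.deriv_of_isOpen isOpen_Ioo (by simp)
  have hdiff : ∀ y ∈ Ioo a b,
      HasDerivAt (fun t => (deriv f t)^2) (2 * deriv f y * deriv (deriv f) y) y := by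
    intro y hy
    have h1 : DifferentiableAt ℝ (deriv f) y :=
      (hdf.differentiableOn (by simp)).differentiableAt (isOpen_Ioo.mem_nhds hy)
    have h2 := h1.hasDerivAt.fun_pow 2
    simpa [pow_one, mul_comm, mul_assoc] using h2
  have key : ∀ y₁ ∈ Ioo a b, ∀ y₂ ∈ Ioo a b, y₁ < y₂ →
      (deriv f y₁)^2 ≠ (deriv f y₂)^2 := by
    intro y₁ h₁ y₂ h₂ hlt heq
    have hsub : Icc y₁ y₂ ⊆ Ioo a b := Icc_subset_Ioo h₁.1 h₂.2
    have hsub' : Ioo y₁ y₂ ⊆ Ioo a b := fun x hx => hsub (Ioo_subset_Icc_self hx)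
    have hc : ContinuousOn (fun t => (deriv f t)^2) (Icc y₁ y₂) :=
      ((hdf.continuousOn).mono hsub).pow 2
    have hd : DifferentiableOn ℝ (fun t => (deriv f t)^2) (Ioo y₁ y₂) :=
      fun x hx => ((hdiff x (hsub' hx)).differentiableAt.differentiableWithinAt)
    obtain ⟨c, hc', hceq⟩ := exists_deriv_eq_slope (fun t => (deriv f t)^2) hlt hc hd
    have hc0 : deriv (fun t => (deriv f t)^2) c = 0 := by
      rw [hceq, heq]; simp
    have := (hdiff c (hsub' hc')).deriv
    rw [hc0] at this
    have h := hfd c (hsub' hc')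
    exact (mul_ne_zero (mul_ne_zero two_ne_zero h.1) h.2) this.symm
  intro y₁ h₁ y₂ h₂ heq
  rcases lt_trichotomy y₁ y₂ with h | h | h
  · exact absurd heq (key y₁ h₁ y₂ h₂ h)
  · exact h
  · exact absurd heq.symm (key y₂ h₂ y₁ h₁ h)

/-- The `K₀ = 1` subcase for translation surfaces `x = f(y) + g(z)`: there is no solution
with `f'`, `f''`, `g'`, `g''` nowhere zero. -/
theorem no_type2_surface_K0_eq_one :
    ¬ ∃ (f g : ℝ → ℝ) (a b c d : ℝ), a < b ∧ c < d ∧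
      ContDiffOn ℝ (⊤ : ℕ∞) f (Ioo a b) ∧ ContDiffOn ℝ (⊤ : ℕ∞) g (Ioo c d) ∧
      (∀ y ∈ Ioo a b, deriv f y ≠ 0 ∧ deriv (deriv f) y ≠ 0) ∧
      (∀ z ∈ Ioo c d, deriv g z ≠ 0 ∧ deriv (deriv g) z ≠ 0) ∧
      (∀ y ∈ Ioo a b, ∀ z ∈ Ioo c d,
        deriv g z ^ 2 + deriv (deriv g) z + deriv g z ^ 4 / (1 + deriv f y ^ 2) =
          deriv (deriv f) y * (2 * deriv (deriv g) z - deriv g z ^ 2 - 1)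
            / (1 + deriv f y ^ 2)) := by
  rintro ⟨f, g, a, b, c, d, hab, hcd, hf, hg, hfd, hgd, heq⟩
  -- cleared form of the equation
  have E : ∀ y ∈ Ioo a b, ∀ z ∈ Ioo c d,
      ((deriv g z)^2 + deriv (deriv g) z) * (1 + (deriv f y)^2) + ((deriv g z)^2)^2 =
        deriv (deriv f) y * (2 * deriv (deriv g) z - (deriv g z)^2 - 1) := by
    intro y hy z hz
    have h := heq y hy z hz
    have hD : (1 + deriv f y ^ 2) ≠ 0 := by positivity
    field_simp at h
    linear_combination h
  -- two points in `Ioo a b`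
  set y₁ : ℝ := (2*a+b)/3 with hy₁def
  set y₂ : ℝ := (a+2*b)/3 with hy₂def
  have hy₁ : y₁ ∈ Ioo a b := by constructor <;> (simp only [hy₁def]; linarith)
  have hy₂ : y₂ ∈ Ioo a b := by constructor <;> (simp only [hy₂def]; linarith)
  have hy₁₂ : y₁ ≠ y₂ := by simp only [hy₁def, hy₂def]; intro h; nlinarith [h]
  -- three points in `Ioo c d`
  set z₁ : ℝ := (3*c+d)/4 with hz₁def
  set z₂ : ℝ := (c+d)/2 with hz₂def
  set z₃ : ℝ := (c+3*d)/4 with hz₃def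
  have hz₁ : z₁ ∈ Ioo c d := by constructor <;> (simp only [hz₁def]; linarith)
  have hz₂ : z₂ ∈ Ioo c d := by constructor <;> (simp only [hz₂def]; linarith)
  have hz₃ : z₃ ∈ Ioo c d := by constructor <;> (simp only [hz₃def]; linarith)
  have hz₁₂ : z₁ ≠ z₂ := by simp only [hz₁def, hz₂def]; intro h; nlinarith [h]
  have hz₁₃ : z₁ ≠ z₃ := by simp only [hz₁def, hz₃def]; intro h; nlinarith [h]
  have hz₂₃ : z₂ ≠ z₃ := by simp only [hz₂def, hz₃def]; intro h; nlinarith [h]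
  -- injectivity of the squared derivatives
  have hinjf := inj_sq_deriv hf hfd
  have hinjg := inj_sq_deriv hg hgd
  have hu : (deriv f y₁)^2 ≠ (deriv f y₂)^2 := fun h => hy₁₂ (hinjf hy₁ hy₂ h)
  have hw12 : (deriv g z₁)^2 ≠ (deriv g z₂)^2 := fun h => hz₁₂ (hinjg hz₁ hz₂ h)
  have hw13 : (deriv g z₁)^2 ≠ (deriv g z₃)^2 := fun h => hz₁₃ (hinjg hz₁ hz₃ h)
  have hw23 : (deriv g z₂)^2 ≠ (deriv g z₃)^2 := fun h => hz₂₃ (hinjg hz₂ hz₃ h)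
  have hw1 : (deriv g z₁)^2 ≠ 0 := pow_ne_zero 2 (hgd z₁ hz₁).1
  exact no_type2_alg_core hu hw12 hw13 hw23 hw1
    (E y₁ hy₁ z₁ hz₁) (E y₂ hy₂ z₁ hz₁) (E y₁ hy₁ z₂ hz₂)
    (E y₂ hy₂ z₂ hz₂) (E y₁ hy₁ z₃ hz₃) (E y₂ hy₂ z₃ hz₃)
end

section
/- Let a, c, d ∈ ℝ and let I ⊆ ℝ be an open interval on which cos((x + c)/√(1 + a²)) > 0. Then the function f(x) = (1 + a²)·log( cos((x + c)/√(1 + a²)) ) + d satisfies (1 + a²)·f''(x) + 1 + a² + f'(x)² = 0 for all x ∈ I. -/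
open Set

/-- The grim reaper curve `f(x) = (1+a²)·log(cos((x+c)/√(1+a²))) + d` satisfies the
equation `(1+a²)f'' + 1 + a² + f'² = 0` characterizing cylinders `z = f(x) + ay` of
constant sectional curvature `1/2`. -/
theorem grim_reaper_type1 (a c d : ℝ) (s t : ℝ) (hst : s < t)
    (hcos : ∀ x ∈ Ioo s t, Real.cos ((x + c) / Real.sqrt (1 + a ^ 2)) > 0)
    (f : ℝ → ℝ)
    (hf : f = fun x => (1 + a ^ 2) * Real.log (Real.cos ((x + c) / Real.sqrt (1 + a ^ 2))) + d) :
    ∀ x ∈ Ioo s t,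
      (1 + a ^ 2) * deriv (deriv f) x + 1 + a ^ 2 + deriv f x ^ 2 = 0 := by
  intro x hx
  set r := Real.sqrt (1 + a ^ 2) with hr
  have ha : (0:ℝ) < 1 + a ^ 2 := by positivity
  have hrpos : 0 < r := Real.sqrt_pos.mpr ha
  have hrne : r ≠ 0 := ne_of_gt hrpos
  have hr2 : r ^ 2 = 1 + a ^ 2 := Real.sq_sqrt ha.le
  have hu : ∀ y : ℝ, HasDerivAt (fun y => (y + c) / r) (1 / r) y := by
    intro y
    simpa [div_eq_mul_inv] using ((hasDerivAt_id y).add_const c).div_const r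
  have hg : ∀ y ∈ Ioo s t, HasDerivAt f (-r * Real.tan ((y + c) / r)) y := by
    intro y hy
    have hcne : Real.cos ((y + c) / r) ≠ 0 := ne_of_gt (hcos y hy)
    have hcosd : HasDerivAt (fun z => Real.cos ((z + c) / r))
        (-Real.sin ((y + c) / r) * (1 / r)) y :=
      (Real.hasDerivAt_cos _).comp y (hu y)
    have hlog : HasDerivAt (fun z => Real.log (Real.cos ((z + c) / r)))
        ((Real.cos ((y + c) / r))⁻¹ * (-Real.sin ((y + c) / r) * (1 / r))) y :=
      by have h := (Real.hasDerivAt_log hcne).comp y hcosd; exact h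
    rw [hf]
    have h2 := (hlog.const_mul (1 + a ^ 2)).add_const d
    refine h2.congr_deriv ?_
    rw [Real.tan_eq_sin_div_cos, ← hr2]
    field_simp
  have hfd : Set.EqOn (deriv f) (fun y => -r * Real.tan ((y + c) / r)) (Ioo s t) :=
    fun y hy => (hg y hy).deriv
  have hderiv2 : deriv (deriv f) x = deriv (fun y => -r * Real.tan ((y + c) / r)) x :=
    Filter.EventuallyEq.deriv_eq
      (Filter.eventuallyEq_of_mem (isOpen_Ioo.mem_nhds hx) hfd)
  have hcne : Real.cos ((x + c) / r) ≠ 0 := ne_of_gt (hcos x hx)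
  have htan : HasDerivAt (fun y => -r * Real.tan ((y + c) / r))
      (-r * (1 / Real.cos ((x + c) / r) ^ 2 * (1 / r))) x :=
    ((Real.hasDerivAt_tan hcne).comp x (hu x)).const_mul (-r)
  rw [hfd hx, hderiv2, htan.deriv]
  simp only [Real.tan_eq_sin_div_cos]
  rw [← hr2]
  have hsc := Real.sin_sq_add_cos_sq ((x + c) / r)
  field_simp
  linear_combination (-(Real.cos ((x + c) / r) ^ 2)) * hr2 +
    (r ^ 2) * hsc
end

section
/- Let a, K₀ ∈ ℝ, c > 0, and let I ⊆ ℝ be an open interval. Let f : ℝ → ℝ be twice differentiable on I with f'(x) ≠ 0 and c·K₀ − exp(2f(x)/(1 + a²)) − c ≠ 0 for all x ∈ I, and suppose f'(x)² + a² = ( exp(2f(x)/(1 + a²)) − c·K₀ ) / ( c·K₀ − exp(2f(x)/(1 + a²)) − c ) for all x ∈ I. Then (1 + a² + f'(x)²)²·(K₀ − 1) + (1 + a² + f'(x)²) + (1 + a²)·f''(x) = 0 for all x ∈ I. -/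
open Set

/-- The first integral `f'² + a² = (e^{2f/(1+a²)} − cK₀)/(cK₀ − e^{2f/(1+a²)} − c)` implies
the constant-curvature equation for cylinders `z = f(x) + ay`. -/
theorem first_integral_type1_cylinder (a K₀ c : ℝ) (hc : 0 < c) (s t : ℝ) (hst : s < t)
    (f : ℝ → ℝ)
    (hdiff : ∀ x ∈ Ioo s t, DifferentiableAt ℝ f x ∧ DifferentiableAt ℝ (deriv f) x)
    (hne : ∀ x ∈ Ioo s t,
      deriv f x ≠ 0 ∧ c * K₀ - Real.exp (2 * f x / (1 + a ^ 2)) - c ≠ 0)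
    (hint : ∀ x ∈ Ioo s t,
      deriv f x ^ 2 + a ^ 2 =
        (Real.exp (2 * f x / (1 + a ^ 2)) - c * K₀)
          / (c * K₀ - Real.exp (2 * f x / (1 + a ^ 2)) - c)) :
    ∀ x ∈ Ioo s t,
      (1 + a ^ 2 + deriv f x ^ 2) ^ 2 * (K₀ - 1) + (1 + a ^ 2 + deriv f x ^ 2)
        + (1 + a ^ 2) * deriv (deriv f) x = 0 := by
  have hA : (0:ℝ) < 1 + a ^ 2 := by positivity
  -- key identity on the interval: (1+a²+f'²)·(cK₀ − E − c) = −c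
  have hkey : ∀ y ∈ Ioo s t,
      (1 + a ^ 2 + deriv f y ^ 2) * (c * K₀ - Real.exp (2 * f y / (1 + a ^ 2)) - c) = -c := by
    intro y hy
    have h1 := hint y hy
    have h2 := (hne y hy).2
    field_simp at h1
    nlinarith [h1]
  intro x hx
  obtain ⟨hf, hf'⟩ := hdiff x hx
  obtain ⟨hg0, hD0⟩ := hne x hx
  have hfx : HasDerivAt f (deriv f x) x := hf.hasDerivAt
  have hgx : HasDerivAt (deriv f) (deriv (deriv f) x) x := hf'.hasDerivAt
  have hE : HasDerivAt (fun y => Real.exp (2 * f y / (1 + a ^ 2)))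
      (Real.exp (2 * f x / (1 + a ^ 2)) * (2 * deriv f x / (1 + a ^ 2))) x := by
    have h1 : HasDerivAt (fun y => 2 * f y / (1 + a ^ 2)) (2 * deriv f x / (1 + a ^ 2)) x :=
      (hfx.const_mul 2).div_const (1 + a ^ 2)
    exact h1.exp
  have hu : HasDerivAt (fun y => 1 + a ^ 2 + deriv f y ^ 2)
      (2 * deriv f x * deriv (deriv f) x) x := by
    have h1 := (hgx.pow 2).const_add (1 + a ^ 2)
    simpa [mul_comm, mul_assoc, mul_left_comm] using h1
  have hD : HasDerivAt (fun y => c * K₀ - Real.exp (2 * f y / (1 + a ^ 2)) - c)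
      (-(Real.exp (2 * f x / (1 + a ^ 2)) * (2 * deriv f x / (1 + a ^ 2)))) x := by
    simpa using ((hasDerivAt_const x (c * K₀)).sub hE).sub_const c
  have hF : HasDerivAt
      (fun y => (1 + a ^ 2 + deriv f y ^ 2) *
        (c * K₀ - Real.exp (2 * f y / (1 + a ^ 2)) - c))
      (2 * deriv f x * deriv (deriv f) x *
          (c * K₀ - Real.exp (2 * f x / (1 + a ^ 2)) - c)
        + (1 + a ^ 2 + deriv f x ^ 2) *
          (-(Real.exp (2 * f x / (1 + a ^ 2)) * (2 * deriv f x / (1 + a ^ 2))))) x :=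
    hu.mul hD
  have heq : (fun y => (1 + a ^ 2 + deriv f y ^ 2) *
      (c * K₀ - Real.exp (2 * f y / (1 + a ^ 2)) - c)) =ᶠ[nhds x] fun _ => -c :=
    Filter.eventuallyEq_of_mem (isOpen_Ioo.mem_nhds hx) hkey
  have hF0 : HasDerivAt
      (fun y => (1 + a ^ 2 + deriv f y ^ 2) *
        (c * K₀ - Real.exp (2 * f y / (1 + a ^ 2)) - c)) 0 x :=
    (hasDerivAt_const x (-c)).congr_of_eventuallyEq heq
  have hd0 := hF.unique hF0
  -- divide by 2 f' ≠ 0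
  have h3 : (1 + a ^ 2) * deriv (deriv f) x *
      (c * K₀ - Real.exp (2 * f x / (1 + a ^ 2)) - c)
      = (1 + a ^ 2 + deriv f x ^ 2) * Real.exp (2 * f x / (1 + a ^ 2)) := by
    have h2g : (2 : ℝ) * deriv f x ≠ 0 := by
      simpa using mul_ne_zero two_ne_zero hg0
    field_simp at hd0
    apply mul_left_cancel₀ h2g
    linear_combination hd0
  have hkeyx := hkey x hx
  have hmain : ((1 + a ^ 2 + deriv f x ^ 2) ^ 2 * (K₀ - 1) + (1 + a ^ 2 + deriv f x ^ 2)
      + (1 + a ^ 2) * deriv (deriv f) x) *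
      (c * K₀ - Real.exp (2 * f x / (1 + a ^ 2)) - c) = 0 := by
    linear_combination h3 + ((1 + a ^ 2 + deriv f x ^ 2) * (K₀ - 1)) * hkeyx
  exact (mul_eq_zero.mp hmain).resolve_right hD0
end

section
/- Let a ∈ ℝ with a ≠ 0, let c₁, c₂ ∈ ℝ, and let I ⊆ ℝ be an open interval on which cos( a²·y/√(1 + a²) + c₂ ) > 0. Then the function f(y) = c₁ + ((1 + a²)/a²)·log( cos( a²·y/√(1 + a²) + c₂ ) ) satisfies (1 + a²)·f''(y) + a²·f'(y)² + a²·(1 + a²) = 0 for all y ∈ I. -/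
open Set

/-- The grim reaper curve `f(y) = c₁ + ((1+a²)/a²)·log(cos(a²y/√(1+a²) + c₂))` satisfies
the equation `(1+a²)f'' + a²f'² + a²(1+a²) = 0` characterizing cylinders `x = f(y) + az`
(`a ≠ 0`) of constant sectional curvature `1/2`. -/
theorem grim_reaper_type2 (a : ℝ) (ha : a ≠ 0) (c₁ c₂ : ℝ) (s t : ℝ) (hst : s < t)
    (hcos : ∀ y ∈ Ioo s t, Real.cos (a ^ 2 * y / Real.sqrt (1 + a ^ 2) + c₂) > 0)
    (f : ℝ → ℝ)
    (hf : f = fun y => c₁ + ((1 + a ^ 2) / a ^ 2)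
        * Real.log (Real.cos (a ^ 2 * y / Real.sqrt (1 + a ^ 2) + c₂))) :
    ∀ y ∈ Ioo s t,
      (1 + a ^ 2) * deriv (deriv f) y + a ^ 2 * deriv f y ^ 2 + a ^ 2 * (1 + a ^ 2) = 0 := by
  intro y hy
  have h1 : (0:ℝ) < 1 + a ^ 2 := by positivity
  have ha2 : (a:ℝ) ^ 2 ≠ 0 := pow_ne_zero 2 ha
  set r := Real.sqrt (1 + a ^ 2) with hr
  have hrpos : 0 < r := Real.sqrt_pos.mpr h1
  have hrsq : r ^ 2 = 1 + a ^ 2 := Real.sq_sqrt h1.le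
  set g : ℝ → ℝ := fun x => a ^ 2 * x / r + c₂ with hg
  set b : ℝ := a ^ 2 / r with hb
  have hgd : ∀ x : ℝ, HasDerivAt g b x := by
    intro x
    have : HasDerivAt (fun x : ℝ => a ^ 2 * x / r + c₂) (a ^ 2 * 1 / r) x :=
      (((hasDerivAt_id x).const_mul (a ^ 2)).div_const r).add_const c₂
    simpa [hb, hg] using this
  set F1 : ℝ → ℝ := fun x => -r * Real.tan (g x) with hF1
  have key : ∀ x ∈ Ioo s t, HasDerivAt f (F1 x) x := by
    intro x hx
    have hc : Real.cos (g x) > 0 := hcos x hx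
    have hcd : HasDerivAt (fun x => Real.cos (g x)) (-Real.sin (g x) * b) x :=
      (Real.hasDerivAt_cos (g x)).comp x (hgd x)
    have hld : HasDerivAt (fun x => Real.log (Real.cos (g x)))
        ((Real.cos (g x))⁻¹ * (-Real.sin (g x) * b)) x :=
      (Real.hasDerivAt_log hc.ne').comp (h₂ := Real.log) x hcd
    have hfd : HasDerivAt f
        ((1 + a ^ 2) / a ^ 2 * ((Real.cos (g x))⁻¹ * (-Real.sin (g x) * b))) x := by
      rw [hf]
      exact (hld.const_mul ((1 + a ^ 2) / a ^ 2)).const_add c₁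
    convert hfd using 1
    simp only [hF1, hb, Real.tan_eq_sin_div_cos]
    rw [← hrsq]
    field_simp
  have hmem : Ioo s t ∈ nhds y := (isOpen_Ioo).mem_nhds hy
  have hderiv1 : deriv f y = F1 y := (key y hy).deriv
  have heq : deriv f =ᶠ[nhds y] F1 :=
    Filter.eventuallyEq_of_mem hmem (fun x hx => (key x hx).deriv)
  have hc : Real.cos (g y) > 0 := hcos y hy
  have hF1d : HasDerivAt F1 (-r * (1 / Real.cos (g y) ^ 2 * b)) y := by
    have := ((Real.hasDerivAt_tan hc.ne').comp y (hgd y)).const_mul (-r)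
    simpa [hF1, neg_mul, mul_comm] using this
  have hderiv2 : deriv (deriv f) y = -r * (1 / Real.cos (g y) ^ 2 * b) := by
    rw [heq.deriv_eq]
    exact hF1d.deriv
  rw [hderiv1, hderiv2]
  have hcne : Real.cos (g y) ≠ 0 := hc.ne'
  simp only [hF1, hb, Real.tan_eq_sin_div_cos]
  rw [← hrsq]
  have hs := Real.sin_sq (g y)
  field_simp
  linear_combination (r ^ 2 * a ^ 2) * hs
end

section
/- Let a ∈ ℝ with a ≠ 0, let c ∈ ℝ, and let I ⊆ ℝ be an open interval. Let f : ℝ → ℝ be twice differentiable on I with f'(y) ≠ 0 and 1 − c·exp(2a²f(y)/(1 + a²)) ≠ 0 for all y ∈ I, and suppose f'(y)² = ( c·(1 + a²)·exp(2a²f(y)/(1 + a²)) − 1 ) / ( 1 − c·exp(2a²f(y)/(1 + a²)) ) for all y ∈ I. Then −(1 + a² + f'(y)²) + (1 + a²)·f''(y)/(1 + f'(y)²) = 0, i.e. (1 + a²)·f''(y) = (1 + a² + f'(y)²)·(1 + f'(y)²), for all y ∈ I. -/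
open Set

/-- The first integral `f'² = (c(1+a²)e^{2a²f/(1+a²)} − 1)/(1 − c·e^{2a²f/(1+a²)})` implies
the constant-curvature equation (`K₀ = 0`) for cylinders `x = f(y) + az`, `a ≠ 0`. -/
theorem first_integral_type2_cylinder_K0_zero (a : ℝ) (ha : a ≠ 0) (c : ℝ)
    (s t : ℝ) (hst : s < t) (f : ℝ → ℝ)
    (hdiff : ∀ y ∈ Ioo s t, DifferentiableAt ℝ f y ∧ DifferentiableAt ℝ (deriv f) y)
    (hne : ∀ y ∈ Ioo s t,
      deriv f y ≠ 0 ∧ 1 - c * Real.exp (2 * a ^ 2 * f y / (1 + a ^ 2)) ≠ 0)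
    (hint : ∀ y ∈ Ioo s t,
      deriv f y ^ 2 =
        (c * (1 + a ^ 2) * Real.exp (2 * a ^ 2 * f y / (1 + a ^ 2)) - 1)
          / (1 - c * Real.exp (2 * a ^ 2 * f y / (1 + a ^ 2)))) :
    ∀ y ∈ Ioo s t,
      -(1 + a ^ 2 + deriv f y ^ 2)
          + (1 + a ^ 2) * deriv (deriv f) y / (1 + deriv f y ^ 2) = 0 ∧
      (1 + a ^ 2) * deriv (deriv f) y
          = (1 + a ^ 2 + deriv f y ^ 2) * (1 + deriv f y ^ 2) := by
  have hK : (0:ℝ) < 1 + a ^ 2 := by positivity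
  have hK' : (1 + a ^ 2 : ℝ) ≠ 0 := ne_of_gt hK
  -- the function F vanishes on the interval
  have hF0 : ∀ x ∈ Ioo s t,
      c * Real.exp (2 * a ^ 2 * f x / (1 + a ^ 2)) * ((1 + a ^ 2) + deriv f x ^ 2)
        - (1 + deriv f x ^ 2) = 0 := by
    intro x hx
    have h1 := hint x hx
    have h2 := (hne x hx).2
    rw [eq_div_iff h2] at h1
    linarith [h1]
  intro y hy
  obtain ⟨hf, hf'⟩ := hdiff y hy
  obtain ⟨hu, _⟩ := hne y hy
  set u := deriv f y with hudef
  set u' := deriv (deriv f) y with hu'def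
  set E := Real.exp (2 * a ^ 2 * f y / (1 + a ^ 2)) with hEdef
  have hfd : HasDerivAt f u y := hf.hasDerivAt
  have hud : HasDerivAt (deriv f) u' y := hf'.hasDerivAt
  have h1 : HasDerivAt (fun x => 2 * a ^ 2 * f x / (1 + a ^ 2))
      (2 * a ^ 2 * u / (1 + a ^ 2)) y :=
    (hfd.const_mul (2 * a ^ 2)).div_const (1 + a ^ 2)
  have h2 : HasDerivAt (fun x => Real.exp (2 * a ^ 2 * f x / (1 + a ^ 2)))
      (E * (2 * a ^ 2 * u / (1 + a ^ 2))) y := h1.exp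
  have h3 : HasDerivAt (fun x => deriv f x ^ 2) (2 * u * u') y := by
    simpa using hud.fun_pow 2
  have hFd : HasDerivAt
      (fun x => c * Real.exp (2 * a ^ 2 * f x / (1 + a ^ 2)) * ((1 + a ^ 2) + deriv f x ^ 2)
        - (1 + deriv f x ^ 2))
      ((c * (E * (2 * a ^ 2 * u / (1 + a ^ 2)))) * ((1 + a ^ 2) + u ^ 2)
        + (c * E) * (2 * u * u') - (2 * u * u')) y := by
    exact ((h2.const_mul c).mul (h3.const_add (1 + a ^ 2))).sub (h3.const_add 1)
  have heq : (fun x => c * Real.exp (2 * a ^ 2 * f x / (1 + a ^ 2))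
      * ((1 + a ^ 2) + deriv f x ^ 2) - (1 + deriv f x ^ 2)) =ᶠ[nhds y] fun _ => 0 := by
    filter_upwards [isOpen_Ioo.mem_nhds hy] with x hx using hF0 x hx
  have hzero : HasDerivAt
      (fun x => c * Real.exp (2 * a ^ 2 * f x / (1 + a ^ 2))
        * ((1 + a ^ 2) + deriv f x ^ 2) - (1 + deriv f x ^ 2)) 0 y :=
    (hasDerivAt_const y (0:ℝ)).congr_of_eventuallyEq heq
  have hD : (c * (E * (2 * a ^ 2 * u / (1 + a ^ 2)))) * ((1 + a ^ 2) + u ^ 2)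
      + (c * E) * (2 * u * u') - (2 * u * u') = 0 := hFd.unique hzero
  have hFy : c * E * ((1 + a ^ 2) + u ^ 2) - (1 + u ^ 2) = 0 := hF0 y hy
  -- clear the denominator in hD
  have hD2 : (c * E * (2 * a ^ 2 * u)) * ((1 + a ^ 2) + u ^ 2)
      + ((c * E) * (2 * u * u') - (2 * u * u')) * (1 + a ^ 2) = 0 := by
    have := congrArg (· * (1 + a ^ 2)) hD
    field_simp at this
    linarith [this]
  have hG : 2 * a ^ 2 * u * ((1 + a ^ 2) * u' - (1 + a ^ 2 + u ^ 2) * (1 + u ^ 2)) = 0 := by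
    linear_combination -(((1 + a ^ 2) + u ^ 2)) * hD2
      + (2 * a ^ 2 * u * ((1 + a ^ 2) + u ^ 2) + 2 * u * u' * (1 + a ^ 2)) * hFy
  have ha2 : (2 * a ^ 2 * u : ℝ) ≠ 0 := by
    have : a ^ 2 ≠ 0 := pow_ne_zero 2 ha
    positivity
  have key : (1 + a ^ 2) * u' = (1 + a ^ 2 + u ^ 2) * (1 + u ^ 2) := by
    have := mul_eq_zero.mp hG
    rcases this with h | h
    · exact absurd h ha2
    · linarith
  refine ⟨?_, key⟩
  have hpos : (1 + u ^ 2 : ℝ) ≠ 0 := by positivity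
  field_simp
  linear_combination key
end

section
/- Let a, K₀ ∈ ℝ, c ∈ ℝ, and let I ⊆ ℝ be an open interval. Let g : ℝ → ℝ be twice differentiable on I with g'(z) ≠ 0 and c + K₀·exp(2g(z)) ≠ 0 for all z ∈ I, and suppose g'(z)² = −(1 + a²)·( c + (K₀ − 1)·exp(2g(z)) ) / ( c + K₀·exp(2g(z)) ) for all z ∈ I. Then (1 + a² + g'(z)²)·(K₀ − 1) + K₀·g'(z)²·(1 + g'(z)²/(1 + a²)) + g''(z) = 0 for all z ∈ I. -/
open Set

/-- The first integral `g'² = −(1+a²)(c + (K₀−1)e^{2g})/(c + K₀e^{2g})` implies the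
constant-curvature equation for cylinders `x = ay + g(z)`. -/
theorem first_integral_type3_cylinder_general (a K₀ c : ℝ)
    (s t : ℝ) (hst : s < t) (g : ℝ → ℝ)
    (hdiff : ∀ z ∈ Ioo s t, DifferentiableAt ℝ g z ∧ DifferentiableAt ℝ (deriv g) z)
    (hne : ∀ z ∈ Ioo s t, deriv g z ≠ 0 ∧ c + K₀ * Real.exp (2 * g z) ≠ 0)
    (hint : ∀ z ∈ Ioo s t,
      deriv g z ^ 2 =
        -(1 + a ^ 2) * (c + (K₀ - 1) * Real.exp (2 * g z))
          / (c + K₀ * Real.exp (2 * g z))) :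
    ∀ z ∈ Ioo s t,
      (1 + a ^ 2 + deriv g z ^ 2) * (K₀ - 1)
        + K₀ * deriv g z ^ 2 * (1 + deriv g z ^ 2 / (1 + a ^ 2))
        + deriv (deriv g) z = 0 := by
  intro z hz
  obtain ⟨hg, hg'⟩ := hdiff z hz
  obtain ⟨hgp, hD⟩ := hne z hz
  have hA : (1 : ℝ) + a ^ 2 ≠ 0 := by positivity
  -- the product form of the first integral holds near z
  have hEq : (fun x => deriv g x ^ 2 * (c + K₀ * Real.exp (2 * g x))
      + (1 + a ^ 2) * (c + (K₀ - 1) * Real.exp (2 * g x)))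
      =ᶠ[nhds z] fun _ => (0 : ℝ) := by
    filter_upwards [isOpen_Ioo.mem_nhds hz] with x hx
    have h1 := hint x hx
    have h2 := (hne x hx).2
    rw [eq_div_iff h2] at h1
    linarith [h1]
  have hd0 : deriv (fun x => deriv g x ^ 2 * (c + K₀ * Real.exp (2 * g x))
      + (1 + a ^ 2) * (c + (K₀ - 1) * Real.exp (2 * g x))) z = 0 := by
    rw [hEq.deriv_eq]
    simp
  -- compute this derivative explicitly
  have Hg : HasDerivAt g (deriv g z) z := hg.hasDerivAt
  have Hg' : HasDerivAt (deriv g) (deriv (deriv g) z) z := hg'.hasDerivAt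
  have HE : HasDerivAt (fun x => Real.exp (2 * g x))
      (Real.exp (2 * g z) * (2 * deriv g z)) z := (Hg.const_mul 2).exp
  have H2 : HasDerivAt (fun x => deriv g x ^ 2)
      ((2 : ℕ) * deriv g z ^ 1 * deriv (deriv g) z) z := Hg'.pow 2
  have HD : HasDerivAt (fun x => c + K₀ * Real.exp (2 * g x))
      (K₀ * (Real.exp (2 * g z) * (2 * deriv g z))) z := (HE.const_mul K₀).const_add c
  have HN : HasDerivAt (fun x => (1 + a ^ 2) * (c + (K₀ - 1) * Real.exp (2 * g x)))
      ((1 + a ^ 2) * ((K₀ - 1) * (Real.exp (2 * g z) * (2 * deriv g z)))) z :=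
    ((HE.const_mul (K₀ - 1)).const_add c).const_mul (1 + a ^ 2)
  have H : HasDerivAt (fun x => deriv g x ^ 2 * (c + K₀ * Real.exp (2 * g x))
      + (1 + a ^ 2) * (c + (K₀ - 1) * Real.exp (2 * g x)))
      (((2 : ℕ) * deriv g z ^ 1 * deriv (deriv g) z) * (c + K₀ * Real.exp (2 * g z))
        + deriv g z ^ 2 * (K₀ * (Real.exp (2 * g z) * (2 * deriv g z)))
        + (1 + a ^ 2) * ((K₀ - 1) * (Real.exp (2 * g z) * (2 * deriv g z)))) z :=
    (H2.mul HD).add HN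
  have h0 : ((2 : ℕ) * deriv g z ^ 1 * deriv (deriv g) z) * (c + K₀ * Real.exp (2 * g z))
      + deriv g z ^ 2 * (K₀ * (Real.exp (2 * g z) * (2 * deriv g z)))
      + (1 + a ^ 2) * ((K₀ - 1) * (Real.exp (2 * g z) * (2 * deriv g z))) = 0 := by
    rw [← H.deriv]; exact hd0
  -- cancel the factor 2 g'
  have h1 : deriv g z * (deriv (deriv g) z * (c + K₀ * Real.exp (2 * g z))
      + K₀ * deriv g z ^ 2 * Real.exp (2 * g z)
      + (1 + a ^ 2) * (K₀ - 1) * Real.exp (2 * g z)) = 0 := by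
    push_cast at h0
    linear_combination h0 / 2
  have key : deriv (deriv g) z * (c + K₀ * Real.exp (2 * g z))
      + K₀ * deriv g z ^ 2 * Real.exp (2 * g z)
      + (1 + a ^ 2) * (K₀ - 1) * Real.exp (2 * g z) = 0 :=
    (mul_eq_zero.mp h1).resolve_left hgp
  -- now finish by algebra
  have hgpp : deriv (deriv g) z =
      (-(K₀ * deriv g z ^ 2 * Real.exp (2 * g z))
        - (1 + a ^ 2) * (K₀ - 1) * Real.exp (2 * g z)) / (c + K₀ * Real.exp (2 * g z)) := by
    rw [eq_div_iff hD]
    linarith [key]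
  have h1' := hint z hz
  rw [hgpp, h1']
  field_simp
  ring
end

section
/- For every f < 0, the function x(f) = (1/2)·( arcsin(exp(2f)) − artanh(√(1 − exp(4f))) ) is differentiable at f with derivative x'(f) = √( (1 + exp(2f)) / (1 − exp(2f)) ). -/
/-- The inverse hyperbolic tangent, `artanh x = (1/2) · log((1 + x)/(1 − x))`. -/
noncomputable def Real.artanh' (x : ℝ) : ℝ := (1 / 2) * Real.log ((1 + x) / (1 - x))

/-- The explicit antiderivative in Theorem 5.1 for `a = 0`, `c = 2`, `K₀ = 1/2`:
`x(f) = (1/2)(arcsin(e^{2f}) − artanh(√(1 − e^{4f})))` has derivative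
`√((1 + e^{2f})/(1 − e^{2f}))` for `f < 0`. -/
theorem antiderivative_example_type1 (f : ℝ) (hf : f < 0) :
    HasDerivAt
      (fun u : ℝ => (1 / 2) *
        (Real.arcsin (Real.exp (2 * u)) - Real.artanh' (Real.sqrt (1 - Real.exp (4 * u)))))
      (Real.sqrt ((1 + Real.exp (2 * f)) / (1 - Real.exp (2 * f)))) f := by
  have hslt : ∀ u : ℝ, Real.sqrt (1 - Real.exp (4 * u)) < 1 := by
    intro u
    rcases le_or_gt (1 - Real.exp (4 * u)) 0 with h | h
    · rw [Real.sqrt_eq_zero'.mpr h]; norm_num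
    · calc Real.sqrt (1 - Real.exp (4 * u)) < Real.sqrt 1 := by
            apply Real.sqrt_lt_sqrt h.le
            have := Real.exp_pos (4 * u); linarith
        _ = 1 := Real.sqrt_one
  -- rewrite artanh as difference of logs
  have hfun : (fun u : ℝ => (1 / 2) *
        (Real.arcsin (Real.exp (2 * u)) - Real.artanh' (Real.sqrt (1 - Real.exp (4 * u)))))
      = (fun u : ℝ => (1 / 2) *
        (Real.arcsin (Real.exp (2 * u)) -
          (1 / 2) * (Real.log (1 + Real.sqrt (1 - Real.exp (4 * u)))
            - Real.log (1 - Real.sqrt (1 - Real.exp (4 * u)))))) := by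
    funext u
    have h1 : (0:ℝ) < 1 + Real.sqrt (1 - Real.exp (4 * u)) := by
      have := Real.sqrt_nonneg (1 - Real.exp (4 * u)); linarith
    have h2 : (0:ℝ) < 1 - Real.sqrt (1 - Real.exp (4 * u)) := by
      have := hslt u; linarith
    rw [Real.artanh', Real.log_div h1.ne' h2.ne']
  rw [hfun]
  set e := Real.exp (2 * f) with he
  have he0 : (0:ℝ) < e := Real.exp_pos _
  have he1 : e < 1 := by
    rw [he, ← Real.exp_zero]
    exact Real.exp_lt_exp.mpr (by linarith)
  have hE : Real.exp (4 * f) = e ^ 2 := by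
    rw [he, sq, ← Real.exp_add]; ring_nf
  set q := Real.sqrt (1 - e ^ 2) with hqdef
  have h1e2 : (0:ℝ) < 1 - e ^ 2 := by nlinarith
  have hq0 : (0:ℝ) < q := Real.sqrt_pos.mpr h1e2
  have hq2 : q ^ 2 = 1 - e ^ 2 := Real.sq_sqrt h1e2.le
  have hq1 : q < 1 := by
    rw [hqdef, ← hE]; exact hslt f
  have hsf : Real.sqrt (1 - Real.exp (4 * f)) = q := by rw [hE]
  -- derivative building blocks
  have h2u : HasDerivAt (fun u : ℝ => 2 * u) 2 f := by
    simpa using (hasDerivAt_id f).const_mul 2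
  have hexp2 : HasDerivAt (fun u : ℝ => Real.exp (2 * u)) (e * 2) f := h2u.exp
  have h4u : HasDerivAt (fun u : ℝ => 4 * u) 4 f := by
    simpa using (hasDerivAt_id f).const_mul 4
  have hexp4 : HasDerivAt (fun u : ℝ => Real.exp (4 * u)) (e ^ 2 * 4) f := by
    simpa [hE] using h4u.exp
  have hinner : HasDerivAt (fun u : ℝ => 1 - Real.exp (4 * u)) (-(e ^ 2 * 4)) f := by
    have h : HasDerivAt (fun u : ℝ => 1 - Real.exp (4 * u)) (0 - e ^ 2 * 4) f :=
      (hasDerivAt_const f (1:ℝ)).sub hexp4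
    simpa using h
  have hsqrt : HasDerivAt (fun u : ℝ => Real.sqrt (1 - Real.exp (4 * u)))
      (-(e ^ 2 * 4) / (2 * q)) f := by
    have := hinner.sqrt (by rw [hE]; exact h1e2.ne')
    simpa [hE] using this
  have harcsin : HasDerivAt (fun u : ℝ => Real.arcsin (Real.exp (2 * u)))
      (1 / Real.sqrt (1 - e ^ 2) * (e * 2)) f := by
    exact (Real.hasDerivAt_arcsin (by linarith) (by linarith)).comp f hexp2
  have hlog1 : HasDerivAt (fun u : ℝ => Real.log (1 + Real.sqrt (1 - Real.exp (4 * u))))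
      ((-(e ^ 2 * 4) / (2 * q)) / (1 + q)) f := by
    have h : HasDerivAt (fun u : ℝ => Real.log (1 + Real.sqrt (1 - Real.exp (4 * u))))
        ((0 + -(e ^ 2 * 4) / (2 * q)) / (1 + Real.sqrt (1 - Real.exp (4 * f)))) f :=
      ((hasDerivAt_const f (1:ℝ)).add hsqrt).log
        (by show 1 + Real.sqrt (1 - Real.exp (4 * f)) ≠ 0; rw [hsf]; positivity)
    simpa [hsf] using h
  have hlog2 : HasDerivAt (fun u : ℝ => Real.log (1 - Real.sqrt (1 - Real.exp (4 * u))))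
      ((-(-(e ^ 2 * 4) / (2 * q))) / (1 - q)) f := by
    have h : HasDerivAt (fun u : ℝ => Real.log (1 - Real.sqrt (1 - Real.exp (4 * u))))
        ((0 - -(e ^ 2 * 4) / (2 * q)) / (1 - Real.sqrt (1 - Real.exp (4 * f)))) f :=
      ((hasDerivAt_const f (1:ℝ)).sub hsqrt).log
        (by show 1 - Real.sqrt (1 - Real.exp (4 * f)) ≠ 0; rw [hsf]; linarith)
    simpa [hsf] using h
  have hmain : HasDerivAt (fun u : ℝ => (1 / 2) *
        (Real.arcsin (Real.exp (2 * u)) -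
          (1 / 2) * (Real.log (1 + Real.sqrt (1 - Real.exp (4 * u)))
            - Real.log (1 - Real.sqrt (1 - Real.exp (4 * u))))))
      ((1 / 2) * (1 / Real.sqrt (1 - e ^ 2) * (e * 2) - (1 / 2) *
        ((-(e ^ 2 * 4) / (2 * q)) / (1 + q) - (-(-(e ^ 2 * 4) / (2 * q))) / (1 - q)))) f :=
    ((harcsin.sub ((hlog1.sub hlog2).const_mul (1/2))).const_mul (1/2))
  convert hmain using 1
  have hlhs : Real.sqrt ((1 + e) / (1 - e)) = (1 + e) / q := by
    have : (1 + e) / (1 - e) = (1 + e) ^ 2 / (1 - e ^ 2) := by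
      rw [div_eq_div_iff (by linarith) (by nlinarith)]; ring
    rw [this, Real.sqrt_div (by positivity), Real.sqrt_sq (by linarith)]
  rw [hlhs]
  have hq1' : (0:ℝ) < 1 - q := by linarith
  have hq1'' : (0:ℝ) < 1 + q := by linarith
  have he2 : e ^ 2 = 1 - q ^ 2 := by linarith
  rw [show Real.sqrt (1 - e ^ 2) = q from hqdef.symm, he2]
  field_simp
  ring
end
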